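/- arXiv:1304.6934 — 8 statements merged into one kernel-verified Lean document; each statement's English description precedes it below -/
import Mathlib

section
/- For every integer D ≥ 1 and every real g with 0 ≤ g ≤ g_c := D^D/(D+1)^{D+1}, there exists a unique real number G in the interval [1, (D+1)/D] satisfying G = 1 + g·G^{D+1}; in particular this solution satisfies 0 ≤ G − 1 ≤ 1/D. -/
/-!
Write `b = (D+1)/D` and `h x = x - g x^(D+1)`, so that the equation reads `h G = 1`.
On `[1, b]` we have `h' x = 1 - g (D+1) x^D > 1 - g_c (D+1) b^D = 0`, so `h` is strictly
increasing there. Since `h 1 ≤ 1` and `h b ≥ b - g_c b^(D+1) = b - 1/D = 1`, the intermediate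
value theorem gives exactly one solution in `[1, b]`.
-/

open Set

lemma strictMonoOn_sub_mul_pow {n : ℕ} (hn : n ≠ 0) {g b : ℝ} (hg : 0 ≤ g)
    (hgb : g * (n + 1) * b ^ n ≤ 1) :
    StrictMonoOn (fun x : ℝ => x - g * x ^ (n + 1)) (Icc 0 b) := by
  refine strictMonoOn_of_deriv_pos (convex_Icc 0 b) (by fun_prop) fun x hx => ?_
  rw [interior_Icc] at hx
  have hderiv : HasDerivAt (fun x : ℝ => x - g * x ^ (n + 1)) (1 - g * ((n + 1 : ℕ) * x ^ n)) x :=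
    (hasDerivAt_id' x).sub ((hasDerivAt_pow (n + 1) x).const_mul g)
  rw [hderiv.deriv, Nat.cast_succ]
  have hxb : x ^ n < b ^ n := pow_lt_pow_left₀ hx.2 hx.1.le hn
  rcases hg.eq_or_lt with rfl | hg
  · simp
  · have : g * ((n + 1) * x ^ n) < g * (n + 1) * b ^ n := by
      rw [← mul_assoc]; gcongr
    linarith

lemma existsUnique_eq_of_strictMonoOn {f : ℝ → ℝ} {a b y : ℝ} (hab : a ≤ b)
    (hf : ContinuousOn f (Icc a b)) (hmono : StrictMonoOn f (Icc a b)) (ha : f a ≤ y)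
    (hb : y ≤ f b) : ∃! x, x ∈ Icc a b ∧ f x = y := by
  obtain ⟨x, hx, hfx⟩ := intermediate_value_Icc hab hf ⟨ha, hb⟩
  exact ⟨x, ⟨hx, hfx⟩, fun x' ⟨hx', hfx'⟩ => hmono.injOn hx' hx (hfx'.trans hfx.symm)⟩

lemma critical_coupling_mul_pow {D : ℕ} (hD : D ≠ 0) :
    (D : ℝ) ^ D / ((D : ℝ) + 1) ^ (D + 1) * ((D : ℝ) + 1) * (((D : ℝ) + 1) / D) ^ D = 1 := by
  have : (D : ℝ) ≠ 0 := Nat.cast_ne_zero.mpr hD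
  rw [div_pow, pow_succ]
  field_simp

lemma one_le_sub_mul_pow_succ {n : ℕ} (hn : n ≠ 0) {g : ℝ}
    (hg : g * (n + 1) * (((n : ℝ) + 1) / n) ^ n ≤ 1) :
    1 ≤ ((n : ℝ) + 1) / n - g * (((n : ℝ) + 1) / n) ^ (n + 1) := by
  have hn' : (n : ℝ) ≠ 0 := Nat.cast_ne_zero.mpr hn
  have : g * (((n : ℝ) + 1) / n) ^ (n + 1) ≤ 1 / n := calc
    g * (((n : ℝ) + 1) / n) ^ (n + 1) = g * (n + 1) * (((n : ℝ) + 1) / n) ^ n * (1 / n) := by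
      rw [pow_succ]; field_simp
    _ ≤ 1 * (1 / n) := by gcongr
    _ = 1 / n := one_mul _
  linarith [add_div (n : ℝ) 1 n, div_self hn']

/-- For every integer `D ≥ 1` and every real `g` with
`0 ≤ g ≤ g_c := D^D/(D+1)^(D+1)`, there exists a unique real `G ∈ [1, (D+1)/D]` satisfying
`G = 1 + g·G^(D+1)`; in particular this solution satisfies `0 ≤ G − 1 ≤ 1/D`. -/
theorem melonic_equation_unique_solution (D : ℕ) (hD : 1 ≤ D) (g : ℝ) (hg0 : 0 ≤ g)
    (hgc : g ≤ (D : ℝ) ^ D / ((D : ℝ) + 1) ^ (D + 1)) :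
    (∃! G : ℝ, G ∈ Set.Icc (1 : ℝ) (((D : ℝ) + 1) / D) ∧ G = 1 + g * G ^ (D + 1)) ∧
    (∀ G : ℝ, G ∈ Set.Icc (1 : ℝ) (((D : ℝ) + 1) / D) → G = 1 + g * G ^ (D + 1) →
      0 ≤ G - 1 ∧ G - 1 ≤ 1 / D) := by
  have hD0 : D ≠ 0 := by omega
  have hb : ((D : ℝ) + 1) / D = 1 + 1 / D := by rw [add_div, div_self (by positivity)]
  set b : ℝ := ((D : ℝ) + 1) / D
  have hb1 : 1 ≤ b := hb ▸ le_add_of_nonneg_right (by positivity)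
  have hgb : g * (D + 1) * b ^ D ≤ 1 := calc
    g * (D + 1) * b ^ D ≤ (D : ℝ) ^ D / ((D : ℝ) + 1) ^ (D + 1) * (D + 1) * b ^ D := by gcongr
    _ = 1 := critical_coupling_mul_pow hD0
  have hmono := (strictMonoOn_sub_mul_pow hD0 hg0 hgb).mono (Icc_subset_Icc_left zero_le_one)
  refine ⟨?_, fun G hG _ => ⟨by linarith [hG.1], by linarith [hG.2]⟩⟩
  obtain ⟨G, hG, huniq⟩ := existsUnique_eq_of_strictMonoOn hb1 (by fun_prop) hmono
    (y := 1) (by simpa using hg0) (one_le_sub_mul_pow_succ hD0 hgb)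
  exact ⟨G, ⟨hG.1, by linarith [hG.2]⟩, fun G' hG' => huniq G' ⟨hG'.1, by linarith [hG'.2]⟩⟩
end

section
/- For every integer D ≥ 1, the series Σ_{p≥0} C_p^{(D+1)} g_c^p, with C_p^{(D+1)} := (1/((D+1)p+1))·binom((D+1)p+1, p) and g_c := D^D/(D+1)^{D+1}, converges and its sum equals (D+1)/D. -/
/-!
For the random walk on `ℕ` that moves by `+D` with probability `x` and by `-1` with probability
`1 - x`, the hitting time theorem says that the walk started at `1` first reaches `0` at time
`(D+1)p + 1` with probability `C_p x^p (1-x)^(Dp+1)`. When `(D+1)x < 1` the drift is negative, an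
exponential supermartingale shows that `0` is reached almost surely, and so
`∑ C_p (x(1-x)^D)^p = 1/(1-x)`. As `x ↑ 1/(D+1)`, `x(1-x)^D` tends from below to its maximum `g_c`,
and monotone convergence gives the value `1/(1 - 1/(D+1)) = (D+1)/D` at `g_c`.
-/

open Finset Filter Topology

/-- The Fuss–Catalan number `C_p^(D+1) = (1/((D+1)p+1))·binom((D+1)p+1, p)`, as a real number. -/
noncomputable def fussCatalan (D p : ℕ) : ℝ :=
  (1 / (((D + 1) * p + 1 : ℕ) : ℝ)) * (Nat.choose ((D + 1) * p + 1) p : ℝ)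

theorem fussCatalan_nonneg (D p : ℕ) : 0 ≤ fussCatalan D p := by
  unfold fussCatalan; positivity

theorem succ_mul_pow_le_one_add_mul_pow (D : ℕ) {u : ℝ} (hu : 0 ≤ u) :
    (D + 1) * u ^ D ≤ 1 + D * u ^ (D + 1) := by
  induction D with
  | zero => simp
  | succ D ih =>
    rw [pow_succ] at ih
    rw [pow_succ, pow_succ, pow_succ]
    push_cast
    nlinarith [mul_nonneg (by positivity : (0 : ℝ) ≤ D + 1)
      (mul_nonneg (pow_nonneg hu D) (sq_nonneg (1 - u)))]

theorem mul_one_sub_pow_le (D : ℕ) {x : ℝ} (hx1 : x ≤ 1) :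
    x * (1 - x) ^ D ≤ (D : ℝ) ^ D / ((D : ℝ) + 1) ^ (D + 1) := by
  rcases Nat.eq_zero_or_pos D with rfl | hD
  · simpa using hx1
  have hD' : (0 : ℝ) < D := by exact_mod_cast hD
  have h := succ_mul_pow_le_one_add_mul_pow D (u := (D + 1) * (1 - x) / D) (by positivity)
  rw [pow_succ, div_pow, mul_pow] at h
  rw [le_div_iff₀ (by positivity)]
  field_simp at h
  rw [pow_succ]
  linear_combination h

theorem hasSum_of_tendsto_of_le {α : Type*} {l : Filter α} [l.NeBot] {f : α → ℕ → ℝ}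
    {a : ℕ → ℝ} {s : α → ℝ} {S : ℝ} (hf : ∀ᶠ i in l, HasSum (f i) (s i))
    (hf0 : ∀ᶠ i in l, ∀ p, 0 ≤ f i p) (hfa : ∀ᶠ i in l, ∀ p, f i p ≤ a p)
    (ha : ∀ p, Tendsto (f · p) l (𝓝 (a p))) (hs : Tendsto s l (𝓝 S)) : HasSum a S := by
  have ha0 (p : ℕ) : 0 ≤ a p := ge_of_tendsto (ha p) (hf0.mono fun i h => h p)
  have hpartial (n : ℕ) : ∑ p ∈ range n, a p ≤ S :=
    le_of_tendsto_of_tendsto (tendsto_finsetSum _ fun p _ => ha p) hs <|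
      (hf.and hf0).mono fun i h => sum_le_hasSum _ (fun p _ => h.2 p) h.1
  have hsum := summable_of_sum_range_le ha0 hpartial
  have hle : S ≤ ∑' p, a p :=
    le_of_tendsto hs <| (hf.and hfa).mono fun i h => hasSum_le h.2 h.1 hsum.hasSum
  exact le_antisymm (hsum.tsum_le_of_sum_range_le hpartial) hle ▸ hsum.hasSum

theorem exists_one_lt_one_sub_add_mul_pow_lt {D : ℕ} {x : ℝ} (hx : (D + 1) * x < 1) :
    ∃ β, 1 < β ∧ 1 - x + x * β ^ (D + 1) < β := by
  have hcont : Continuous fun β : ℝ => x * ∑ t ∈ range (D + 1), β ^ t := by fun_prop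
  have hlim := (hcont.tendsto 1).mono_left (nhdsWithin_le_nhds (s := Set.Ioi 1))
  have h1 : x * ∑ t ∈ range (D + 1), (1 : ℝ) ^ t < 1 := by simpa [mul_comm] using hx
  obtain ⟨β, hβ, hβ1⟩ := ((hlim.eventually (gt_mem_nhds h1)).and self_mem_nhdsWithin).exists
  refine ⟨β, hβ1, ?_⟩
  have hgeom := geom_sum_mul β (D + 1)
  nlinarith [mul_lt_mul_of_pos_right hβ (sub_pos.mpr (hβ1 : 1 < β))]

/-- The probability that the walk on `ℕ` started at `j`, stepping by `+D` with probability `x` and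
by `-1` with probability `1 - x`, first reaches `0` at time `s`. -/
noncomputable def firstPassage (D : ℕ) (x : ℝ) : ℕ → ℕ → ℝ
  | 0, j => if j = 0 then 1 else 0
  | _ + 1, 0 => 0
  | s + 1, j + 1 => (1 - x) * firstPassage D x s j + x * firstPassage D x s (j + 1 + D)

noncomputable def hitWithin (D : ℕ) (x : ℝ) (m j : ℕ) : ℝ :=
  ∑ s ∈ range m, firstPassage D x s j

section RandomWalk

variable {D : ℕ} {x : ℝ}

theorem exists_eq_of_firstPassage_ne_zero {s j : ℕ} (h : firstPassage D x s j ≠ 0) :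
    ∃ k, s = (D + 1) * k + j := by
  induction s generalizing j with
  | zero => cases j <;> simp_all [firstPassage]
  | succ s ih =>
    cases j with
    | zero => simp [firstPassage] at h
    | succ j =>
      by_cases hj : firstPassage D x s j = 0
      · obtain ⟨k, hk⟩ := ih (j := j + 1 + D) fun h' => h (by simp [firstPassage, hj, h'])
        exact ⟨k + 1, by rw [hk]; ring⟩
      · obtain ⟨k, hk⟩ := ih hj
        exact ⟨k, by omega⟩

theorem firstPassage_eq_zero_of_lt {s j : ℕ} (h : s < j) : firstPassage D x s j = 0 := by
  by_contra hne
  obtain ⟨k, hk⟩ := exists_eq_of_firstPassage_ne_zero hne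
  nlinarith

theorem firstPassage_self (s : ℕ) : firstPassage D x s s = (1 - x) ^ s := by
  induction s with
  | zero => simp [firstPassage]
  | succ s ih =>
    simp [firstPassage, ih, firstPassage_eq_zero_of_lt (by omega : s < s + 1 + D), pow_succ']

theorem firstPassage_nonneg (hx0 : 0 ≤ x) (hx1 : x ≤ 1) (s j : ℕ) : 0 ≤ firstPassage D x s j := by
  induction s generalizing j with
  | zero => unfold firstPassage; positivity
  | succ s ih =>
    cases j with
    | zero => simp [firstPassage]
    | succ j =>
      have := ih j
      have := ih (j + 1 + D)
      simp only [firstPassage]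
      nlinarith

/-- The hitting time theorem, multiplied by `s` so that it also covers `s = 0`. -/
theorem natCast_mul_firstPassage {s j k : ℕ} (hs : s = (D + 1) * k + j) :
    (s : ℝ) * firstPassage D x s j = j * s.choose k * x ^ k * (1 - x) ^ (s - k) := by
  induction s generalizing j k with
  | zero =>
    obtain rfl : j = 0 := by omega
    simp
  | succ s ih =>
    cases j with
    | zero => simp [firstPassage]
    | succ j =>
      cases k with
      | zero =>
        obtain rfl : s = j := by omega
        simp [firstPassage, firstPassage_self,
          firstPassage_eq_zero_of_lt (by omega : s < s + 1 + D), pow_succ']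
      | succ k =>
        have hk : (D + 1) * (k + 1) = (D + 1) * k + D + 1 := by ring
        have hks : k + 1 ≤ s := by nlinarith
        obtain ⟨m, hm⟩ : ∃ m, s = k + 1 + m := ⟨s - (k + 1), by omega⟩
        have hdown := ih (j := j) (k := k + 1) (by omega)
        have hup := ih (j := j + 1 + D) (k := k) (by omega)
        rw [show s - (k + 1) = m by omega] at hdown
        rw [show s - k = m + 1 by omega] at hup
        have hchoose : ((s.choose (k + 1) : ℕ) : ℝ) * (k + 1) = s.choose k * (s - k) := by
          have := congrArg (Nat.cast : ℕ → ℝ) (Nat.choose_succ_right_eq s k)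
          push_cast [Nat.cast_sub (by omega : k ≤ s)] at this
          exact this
        have hsR : (s : ℝ) = (D + 1) * (k + 1) + j := by
          exact_mod_cast (by omega : s = (D + 1) * (k + 1) + j)
        have hs_pos : (s : ℝ) ≠ 0 := by rw [hsR]; positivity
        rw [show s + 1 - (k + 1) = m + 1 by omega]
        apply mul_left_cancel₀ hs_pos
        simp only [firstPassage]
        rw [Nat.choose_succ_succ]
        push_cast at hup ⊢
        linear_combination (1 - x) * (s + 1) * hdown + x * (s + 1) * hup
          + x ^ (k + 1) * (1 - x) ^ (m + 1) *
            (-(D + 1) * hchoose - (s.choose (k + 1) + s.choose k) * hsR)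

theorem firstPassage_one (p : ℕ) :
    firstPassage D x ((D + 1) * p + 1) 1 = fussCatalan D p * x ^ p * (1 - x) ^ (D * p + 1) := by
  have h := natCast_mul_firstPassage (D := D) (x := x) (j := 1) (k := p) rfl
  rw [show (D + 1) * p + 1 - p = D * p + 1 by rw [add_mul]; omega] at h
  rw [fussCatalan]
  push_cast at h ⊢
  field_simp
  linarith

theorem hitWithin_succ_zero (m : ℕ) : hitWithin D x (m + 1) 0 = 1 := by
  simp [hitWithin, sum_range_succ', firstPassage]

theorem hitWithin_succ_succ (m j : ℕ) :
    hitWithin D x (m + 1) (j + 1) =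
      (1 - x) * hitWithin D x m j + x * hitWithin D x m (j + 1 + D) := by
  simp [hitWithin, sum_range_succ', firstPassage, mul_sum, sum_add_distrib]

theorem hitWithin_le_one (hx0 : 0 ≤ x) (hx1 : x ≤ 1) (m j : ℕ) : hitWithin D x m j ≤ 1 := by
  induction m generalizing j with
  | zero => simp [hitWithin]
  | succ m ih =>
    cases j with
    | zero => rw [hitWithin_succ_zero]
    | succ j =>
      rw [hitWithin_succ_succ]
      nlinarith [ih j, ih (j + 1 + D)]

/-- The hypothesis on `β` and `γ` makes `β ^ position * γ ^ (-time)` a supermartingale. -/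
theorem one_sub_le_hitWithin (hx0 : 0 ≤ x) (hx1 : x ≤ 1) {β γ : ℝ} (hβ : 1 ≤ β) (hγ : 0 ≤ γ)
    (hβγ : 1 - x + x * β ^ (D + 1) ≤ β * γ) (m j : ℕ) :
    1 - β ^ j * γ ^ m ≤ hitWithin D x m j := by
  induction m generalizing j with
  | zero => simpa [hitWithin] using one_le_pow₀ hβ
  | succ m ih =>
    cases j with
    | zero => rw [hitWithin_succ_zero]; simp; positivity
    | succ j =>
      rw [hitWithin_succ_succ]
      have hstep := mul_le_mul_of_nonneg_left hβγ (by positivity : 0 ≤ β ^ j * γ ^ m)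
      have hdown := mul_le_mul_of_nonneg_left (ih j) (by linarith : 0 ≤ 1 - x)
      have hup := mul_le_mul_of_nonneg_left (ih (j + 1 + D)) hx0
      rw [show β ^ (j + 1 + D) = β ^ j * β ^ (D + 1) by rw [← pow_add]; ring_nf] at hup
      rw [pow_succ, pow_succ]
      linarith

theorem hasSum_firstPassage (hx0 : 0 ≤ x) (hx : (D + 1) * x < 1) (j : ℕ) :
    HasSum (fun s => firstPassage D x s j) 1 := by
  have hx1 : x ≤ 1 := by nlinarith
  obtain ⟨β, hβ, hβx⟩ := exists_one_lt_one_sub_add_mul_pow_lt hx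
  set γ := (1 - x + x * β ^ (D + 1)) / β
  have hβγ : 1 - x + x * β ^ (D + 1) = β * γ := by unfold γ; field_simp
  have hγ0 : 0 ≤ γ := by positivity
  have hγ1 : γ < 1 := (div_lt_one (by linarith)).mpr hβx
  rw [hasSum_iff_tendsto_nat_of_nonneg (firstPassage_nonneg hx0 hx1 · j)]
  have hlow : Tendsto (fun m => 1 - β ^ j * γ ^ m) atTop (𝓝 1) := by
    simpa using (tendsto_pow_atTop_nhds_zero_of_lt_one hγ0 hγ1).const_mul (β ^ j) |>.const_sub 1
  exact tendsto_of_tendsto_of_tendsto_of_le_of_le hlow tendsto_const_nhds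
    (one_sub_le_hitWithin hx0 hx1 hβ.le hγ0 hβγ.le · j) (hitWithin_le_one hx0 hx1 · j)

theorem hasSum_fussCatalan_mul_pow (hx0 : 0 ≤ x) (hx : (D + 1) * x < 1) :
    HasSum (fun p => fussCatalan D p * (x * (1 - x) ^ D) ^ p) (1 - x)⁻¹ := by
  have hx1 : 1 - x ≠ 0 := by nlinarith
  have hinj : Function.Injective fun p => (D + 1) * p + 1 := fun p q h => by
    simpa using (Nat.add_right_cancel h : (D + 1) * p = (D + 1) * q)
  have h := (hinj.hasSum_iff ?_).mpr (hasSum_firstPassage hx0 hx 1)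
  · refine (mul_one (1 - x)⁻¹ ▸ h.mul_left (1 - x)⁻¹).congr_fun fun p => ?_
    rw [Function.comp_apply, firstPassage_one, pow_succ, pow_mul, mul_pow]
    field_simp
  · intro s hs
    by_contra hne
    obtain ⟨k, hk⟩ := exists_eq_of_firstPassage_ne_zero hne
    exact hs ⟨k, hk.symm⟩

end RandomWalk

/-- For every integer `D ≥ 1`, the series `Σ_{p≥0} C_p^(D+1) g_c^p`, with
`g_c := D^D/(D+1)^(D+1)`, converges and its sum equals `(D+1)/D`. -/
theorem fussCatalan_series_at_critical (D : ℕ) (hD : 1 ≤ D) :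
    HasSum (fun p : ℕ => fussCatalan D p * ((D : ℝ) ^ D / ((D : ℝ) + 1) ^ (D + 1)) ^ p)
      (((D : ℝ) + 1) / D) := by
  obtain ⟨x₀, hx₀⟩ : ∃ x₀ : ℝ, (D + 1) * x₀ = 1 := ⟨_, mul_inv_cancel₀ (by positivity)⟩
  have hD' : (0 : ℝ) < D := by exact_mod_cast hD
  have hx₀1 : 1 - x₀ = D / ((D : ℝ) + 1) := by rw [eq_div_iff (by positivity)]; linarith
  have hcrit : x₀ * (1 - x₀) ^ D = (D : ℝ) ^ D / ((D : ℝ) + 1) ^ (D + 1) := by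
    rw [hx₀1, div_pow, pow_succ]
    field_simp
    linear_combination hx₀
  have hsub : ∀ᶠ x : ℝ in 𝓝[<] x₀, 0 ≤ x ∧ ((D : ℝ) + 1) * x < 1 ∧ x ≤ 1 := by
    filter_upwards [Ioo_mem_nhdsLT (show 0 < x₀ by nlinarith)] with x hx
    exact ⟨hx.1.le, by nlinarith [hx.2], by nlinarith [hx.1, hx.2]⟩
  have hg (x : ℝ) (hx : 0 ≤ x ∧ ((D : ℝ) + 1) * x < 1 ∧ x ≤ 1) : 0 ≤ x * (1 - x) ^ D :=
    mul_nonneg hx.1 (pow_nonneg (sub_nonneg.2 hx.2.2) D)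
  refine hasSum_of_tendsto_of_le (l := 𝓝[<] x₀) (s := fun x => (1 - x)⁻¹)
    (f := fun x p => fussCatalan D p * (x * (1 - x) ^ D) ^ p) ?_ ?_ ?_ (fun p => ?_) ?_
  · exact hsub.mono fun x hx => hasSum_fussCatalan_mul_pow hx.1 hx.2.1
  · exact hsub.mono fun x hx p => mul_nonneg (fussCatalan_nonneg D p) (pow_nonneg (hg x hx) p)
  · exact hsub.mono fun x hx p => mul_le_mul_of_nonneg_left
      (pow_le_pow_left₀ (hg x hx) (mul_one_sub_pow_le D hx.2.2) p) (fussCatalan_nonneg D p)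
  · rw [← hcrit]
    exact (Continuous.tendsto (by fun_prop) x₀).mono_left nhdsWithin_le_nhds
  · rw [show ((D : ℝ) + 1) / D = (1 - x₀)⁻¹ by rw [hx₀1, inv_div]]
    exact ((Continuous.tendsto (by fun_prop) x₀).inv₀ (by rw [hx₀1]; positivity)).mono_left
      nhdsWithin_le_nhds
end

section
/- Let D ≥ 1 be an integer, g_c := D^D/(D+1)^{D+1}, and let G_LO : [0, g_c] → ℝ assign to each g the unique solution G ∈ [1, (D+1)/D] of G = 1 + g·G^{D+1}. Then on the open interval (0, g_c), one has 1 − g·D·G_LO(g)^{D+1} = (D+1) − D·G_LO(g) > 0, and G_LO is differentiable with derivative G_LO'(g) = G_LO(g)^{D+2} / (1 − g·D·G_LO(g)^{D+1}). -/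
/-!
Solving `G = 1 + g G^(D+1)` for the coupling gives `g = φ(G) := (G - 1) / G^(D+1)`, whose
derivative `((D+1) - D G) / G^(D+2)` is positive for `D G < D + 1`. So `φ` increases strictly
from `φ 1 = 0` to `φ ((D+1)/D) = g_c`, and `G_LO` is its inverse. A strictly monotone inverse
is continuous at interior points, so the inverse function theorem gives
`G_LO' = 1 / φ'(G_LO) = G_LO^(D+2) / ((D+1) - D G_LO)`, and the melonic equation turns
`(D+1) - D G_LO` into `1 - g D G_LO^(D+1)`.
-/

open Set Filter Topology

section LeftInverse

variable {φ f : ℝ → ℝ} {a b x : ℝ}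

theorem strictMonoOn_of_leftInvOn {s t : Set ℝ} (hφ : MonotoneOn φ s) (hf : MapsTo f t s)
    (hinv : LeftInvOn φ f t) : StrictMonoOn f t := by
  intro x hx y hy hxy
  by_contra! hyx
  have := hφ (hf hy) (hf hx) hyx
  rw [hinv hx, hinv hy] at this
  linarith

theorem mem_Ioo_of_leftInvOn (hf : MapsTo f (Icc (φ a) (φ b)) (Icc a b))
    (hinv : LeftInvOn φ f (Icc (φ a) (φ b))) (hx : x ∈ Ioo (φ a) (φ b)) : f x ∈ Ioo a b := by
  have hxI : x ∈ Icc (φ a) (φ b) := Ioo_subset_Icc_self hx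
  obtain ⟨hax, hxb⟩ := hf hxI
  refine ⟨hax.lt_of_ne ?_, hxb.lt_of_ne ?_⟩ <;> rintro h
  · exact hx.1.ne' (by rw [← hinv hxI, ← h])
  · exact hx.2.ne (by rw [← hinv hxI, h])

theorem continuousAt_of_leftInvOn (hφ : StrictMonoOn φ (Icc a b))
    (hf : MapsTo f (Icc (φ a) (φ b)) (Icc a b)) (hinv : LeftInvOn φ f (Icc (φ a) (φ b)))
    (hx : x ∈ Ioo (φ a) (φ b)) : ContinuousAt f x := by
  have hmono : StrictMonoOn f (Ioo (φ a) (φ b)) :=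
    (strictMonoOn_of_leftInvOn hφ.monotoneOn hf hinv).mono Ioo_subset_Icc_self
  have himage : Ioo a b ⊆ f '' Ioo (φ a) (φ b) := by
    intro y hy
    have hyI : y ∈ Icc a b := Ioo_subset_Icc_self hy
    have hab : a ≤ b := hy.1.le.trans hy.2.le
    have hφy : φ y ∈ Ioo (φ a) (φ b) :=
      ⟨hφ (left_mem_Icc.2 hab) hyI hy.1, hφ hyI (right_mem_Icc.2 hab) hy.2⟩
    have hφyI : φ y ∈ Icc (φ a) (φ b) := Ioo_subset_Icc_self hφy
    exact ⟨φ y, hφy, hφ.injOn (hf hφyI) hyI (hinv hφyI)⟩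
  exact hmono.continuousAt_of_image_mem_nhds (isOpen_Ioo.mem_nhds hx)
    (mem_of_superset (isOpen_Ioo.mem_nhds (mem_Ioo_of_leftInvOn hf hinv hx)) himage)

theorem hasDerivAt_of_leftInvOn {φ' : ℝ} (hφ : StrictMonoOn φ (Icc a b))
    (hf : MapsTo f (Icc (φ a) (φ b)) (Icc a b)) (hinv : LeftInvOn φ f (Icc (φ a) (φ b)))
    (hx : x ∈ Ioo (φ a) (φ b)) (hder : HasDerivAt φ φ' (f x)) (hφ' : φ' ≠ 0) :
    HasDerivAt f φ'⁻¹ x :=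
  hder.of_local_left_inverse (continuousAt_of_leftInvOn hφ hf hinv hx) hφ' <|
    eventually_of_mem (isOpen_Ioo.mem_nhds hx) fun _ hy => hinv (Ioo_subset_Icc_self hy)

end LeftInverse

section MelonicCoupling

variable (D : ℕ)

noncomputable def melonicCoupling (G : ℝ) : ℝ := (G - 1) / G ^ (D + 1)

theorem melonicCoupling_one : melonicCoupling D 1 = 0 := by
  simp [melonicCoupling]

variable {D}

theorem melonicCoupling_critical (hD : D ≠ 0) :
    melonicCoupling D (((D : ℝ) + 1) / D) = (D : ℝ) ^ D / ((D : ℝ) + 1) ^ (D + 1) := by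
  have hD' : (D : ℝ) ≠ 0 := Nat.cast_ne_zero.2 hD
  have hsub : ((D : ℝ) + 1) / D - 1 = 1 / D := by field_simp; ring
  rw [melonicCoupling, hsub, div_pow]
  field_simp
  ring

theorem melonicCoupling_eq {g G : ℝ} (hG : G ≠ 0) (h : G = 1 + g * G ^ (D + 1)) :
    melonicCoupling D G = g := by
  rw [melonicCoupling, div_eq_iff (pow_ne_zero _ hG)]
  linarith

theorem hasDerivAt_melonicCoupling {G : ℝ} (hG : G ≠ 0) :
    HasDerivAt (melonicCoupling D) (((D : ℝ) + 1 - D * G) / G ^ (D + 2)) G := by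
  have hpow : HasDerivAt (fun x : ℝ => x ^ (D + 1)) ((D + 1 : ℕ) * G ^ D) G := by
    simpa using hasDerivAt_pow (D + 1) G
  refine (((hasDerivAt_id G).sub_const 1).div hpow (pow_ne_zero _ hG)).congr_deriv ?_
  simp only [id]
  field_simp
  push_cast
  ring

theorem strictMonoOn_melonicCoupling (hD : 0 < D) :
    StrictMonoOn (melonicCoupling D) (Icc 1 (((D : ℝ) + 1) / D)) := by
  have hD' : (0 : ℝ) < D := Nat.cast_pos.2 hD
  refine strictMonoOn_of_deriv_pos (convex_Icc _ _) ?_ fun G hG => ?_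
  · exact continuousOn_of_forall_continuousAt fun G hG =>
      (hasDerivAt_melonicCoupling (by linarith [hG.1])).continuousAt
  · rw [interior_Icc] at hG
    have hG0 : 0 < G := by linarith [hG.1]
    have hDG : D * G < (D : ℝ) + 1 := by rw [← lt_div_iff₀' hD']; exact hG.2
    rw [(hasDerivAt_melonicCoupling hG0.ne').deriv]
    exact div_pos (by linarith) (by positivity)

end MelonicCoupling

/-- Let `D ≥ 1`, `g_c := D^D/(D+1)^(D+1)`, and let `G_LO : [0, g_c] → ℝ` assign to
each `g` the unique solution `G ∈ [1, (D+1)/D]` of `G = 1 + g·G^(D+1)`. Then on `(0, g_c)` one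
has `1 − g·D·G_LO(g)^(D+1) = (D+1) − D·G_LO(g) > 0`, and `G_LO` is differentiable with
derivative `G_LO'(g) = G_LO(g)^(D+2) / (1 − g·D·G_LO(g)^(D+1))`. -/
theorem melonic_two_point_derivative (D : ℕ) (hD : 1 ≤ D) (G_LO : ℝ → ℝ)
    (hG : ∀ g ∈ Set.Icc (0 : ℝ) ((D : ℝ) ^ D / ((D : ℝ) + 1) ^ (D + 1)),
      G_LO g ∈ Set.Icc (1 : ℝ) (((D : ℝ) + 1) / D) ∧ G_LO g = 1 + g * (G_LO g) ^ (D + 1)) :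
    ∀ g ∈ Set.Ioo (0 : ℝ) ((D : ℝ) ^ D / ((D : ℝ) + 1) ^ (D + 1)),
      (1 - g * D * (G_LO g) ^ (D + 1) = ((D : ℝ) + 1) - D * G_LO g) ∧
      (0 < 1 - g * D * (G_LO g) ^ (D + 1)) ∧
      HasDerivAt G_LO ((G_LO g) ^ (D + 2) / (1 - g * D * (G_LO g) ^ (D + 1))) g := by
  have hD' : (0 : ℝ) < D := by exact_mod_cast hD
  rw [← melonicCoupling_one D, ← melonicCoupling_critical (by omega)] at hG
  have hmaps : MapsTo G_LO _ _ := fun g hg => (hG g hg).1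
  have hinv : LeftInvOn (melonicCoupling D) G_LO _ := fun g hg =>
    melonicCoupling_eq (by linarith [(hG g hg).1.1]) (hG g hg).2
  intro g hg
  rw [← melonicCoupling_one D, ← melonicCoupling_critical (by omega)] at hg
  have hid : 1 - g * D * G_LO g ^ (D + 1) = (D : ℝ) + 1 - D * G_LO g := by
    linear_combination (D : ℝ) * (hG g (Ioo_subset_Icc_self hg)).2
  obtain ⟨hG1, hGc⟩ := mem_Ioo_of_leftInvOn hmaps hinv hg
  have hpos : 0 < (D : ℝ) + 1 - D * G_LO g := by
    rw [sub_pos, ← lt_div_iff₀' hD']; exact hGc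
  refine ⟨hid, hid ▸ hpos, ?_⟩
  have hder := hasDerivAt_of_leftInvOn (strictMonoOn_melonicCoupling hD) hmaps hinv hg
    (hasDerivAt_melonicCoupling (by linarith)) (div_pos hpos (by positivity)).ne'
  rwa [hid, ← inv_div]
end

section
/- Let D ≥ 1 be an integer, g_c := D^D/(D+1)^{D+1}, and let G_LO : [0, g_c] → ℝ assign to each g the unique solution G ∈ [1, (D+1)/D] of G = 1 + g·G^{D+1}. Then lim_{g→g_c⁻} ((D+1)/D − G_LO(g)) / √(1 − g/g_c) = √(2(D+1)/D^3); i.e., near the critical coupling G_LO behaves as a constant plus a square-root singularity in (1 − g/g_c). -/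
def melS (D : ℕ) (a : ℝ) (x : ℝ) : ℝ :=
  ∑ j ∈ Finset.range D, ((j : ℝ) + 1) * a ^ j * x ^ (D - 1 - j)

lemma melS_ident (a x : ℝ) (D : ℕ) :
    (x - a) ^ 2 * melS D a x
      = x ^ (D + 1) - ((D : ℝ) + 1) * a ^ D * x + (D : ℝ) * a ^ (D + 1) := by
  induction D with
  | zero => simp [melS]
  | succ n ih =>
    unfold melS at ih ⊢
    rw [Finset.sum_range_succ]
    have hs : ∀ j ∈ Finset.range n,
        ((j : ℝ) + 1) * a ^ j * x ^ (n + 1 - 1 - j)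
          = x * (((j : ℝ) + 1) * a ^ j * x ^ (n - 1 - j)) := by
      intro j hj
      have hj' := Finset.mem_range.mp hj
      have h : n + 1 - 1 - j = (n - 1 - j) + 1 := by omega
      rw [h, pow_succ]; ring
    rw [Finset.sum_congr rfl hs, ← Finset.mul_sum]
    have h0 : n + 1 - 1 - n = 0 := by omega
    rw [h0]
    push_cast
    linear_combination x * ih

lemma gauss_sum (D : ℕ) : ∑ j ∈ Finset.range D, ((j : ℝ) + 1) = D * (D + 1) / 2 := by
  induction D with
  | zero => simp
  | succ n ih => rw [Finset.sum_range_succ, ih]; push_cast; ring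

lemma melS_pos {D : ℕ} (hD : 1 ≤ D) {a x : ℝ} (ha : 0 < a) (hx : 0 < x) :
    0 < melS D a x := by
  apply Finset.sum_pos
  · intro j hj; positivity
  · exact Finset.nonempty_range_iff.mpr (by omega)

lemma melS_cont (D : ℕ) (a : ℝ) : Continuous (melS D a) := by
  unfold melS
  exact continuous_finset_sum _ fun j _ => continuous_const.mul (continuous_pow _)

lemma melS_self {D : ℕ} (hD : 1 ≤ D) (a : ℝ) :
    melS D a a = ((D : ℝ) * ((D : ℝ) + 1) / 2) * a ^ (D - 1) := by
  unfold melS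
  have hs : ∀ j ∈ Finset.range D,
      ((j : ℝ) + 1) * a ^ j * a ^ (D - 1 - j) = ((j : ℝ) + 1) * a ^ (D - 1) := by
    intro j hj
    have hj' := Finset.mem_range.mp hj
    rw [mul_assoc, ← pow_add]
    congr 2
    omega
  rw [Finset.sum_congr rfl hs, ← Finset.sum_mul, gauss_sum]

open Filter Set

/-- Let `D ≥ 1`, `g_c := D^D/(D+1)^(D+1)`, and let `G_LO : [0, g_c] → ℝ` assign to
each `g` the unique solution `G ∈ [1, (D+1)/D]` of `G = 1 + g·G^(D+1)`. Then
`lim_{g→g_c⁻} ((D+1)/D − G_LO(g)) / √(1 − g/g_c) = √(2(D+1)/D³)`. -/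
theorem melonic_two_point_square_root_singularity (D : ℕ) (hD : 1 ≤ D) (G_LO : ℝ → ℝ)
    (hG : ∀ g ∈ Set.Icc (0 : ℝ) ((D : ℝ) ^ D / ((D : ℝ) + 1) ^ (D + 1)),
      G_LO g ∈ Set.Icc (1 : ℝ) (((D : ℝ) + 1) / D) ∧ G_LO g = 1 + g * (G_LO g) ^ (D + 1)) :
    Filter.Tendsto
      (fun g : ℝ => ((((D : ℝ) + 1) / D) - G_LO g) /
        Real.sqrt (1 - g / ((D : ℝ) ^ D / ((D : ℝ) + 1) ^ (D + 1))))
      (nhdsWithin ((D : ℝ) ^ D / ((D : ℝ) + 1) ^ (D + 1))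
        (Set.Iio ((D : ℝ) ^ D / ((D : ℝ) + 1) ^ (D + 1))))
      (nhds (Real.sqrt (2 * ((D : ℝ) + 1) / (D : ℝ) ^ 3))) := by
  have hd0 : (0 : ℝ) < (D : ℝ) := by exact_mod_cast Nat.pos_of_ne_zero (by omega)
  have hdne : (D : ℝ) ≠ 0 := ne_of_gt hd0
  have hd1ne : (D : ℝ) + 1 ≠ 0 := by positivity
  set gc : ℝ := (D : ℝ) ^ D / ((D : ℝ) + 1) ^ (D + 1) with hgc_def
  set Gc : ℝ := ((D : ℝ) + 1) / (D : ℝ) with hGc_def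
  have hgc0 : (0 : ℝ) < gc := by rw [hgc_def]; positivity
  have hgcne : gc ≠ 0 := ne_of_gt hgc0
  have hGc1 : (1 : ℝ) < Gc := by rw [hGc_def, lt_div_iff₀ hd0]; linarith
  have hGc0 : (0 : ℝ) < Gc := lt_trans one_pos hGc1
  -- key arithmetic facts
  have hA : gc * (((D : ℝ) + 1) * Gc ^ D) = 1 := by
    rw [hgc_def, hGc_def, div_pow]; field_simp; ring
  have hB : gc * ((D : ℝ) * Gc ^ (D + 1)) = 1 := by
    rw [hgc_def, hGc_def, div_pow]; field_simp; ring
  have hGcmul : (D : ℝ) * Gc = (D : ℝ) + 1 := by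
    rw [hGc_def]; field_simp
  clear_value gc Gc
  clear hgc_def hGc_def
  -- key polynomial identity
  have hP : ∀ x : ℝ, gc * x ^ (D + 1) - x + 1 = gc * ((x - Gc) ^ 2 * melS D Gc x) := by
    intro x
    have h := melS_ident Gc x D
    linear_combination (-gc) * h + x * hA - hB
  have hfix : gc * Gc ^ (D + 1) = Gc - 1 := by
    have h := hP Gc
    simp at h
    linarith
  have hfGc : (Gc - 1) / Gc ^ (D + 1) = gc := by
    rw [div_eq_iff (by positivity)]
    linarith [hfix]
  -- strict monotonicity of f x = (x-1)/x^(D+1) on [1, Gc]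
  have hmono : StrictMonoOn (fun x : ℝ => (x - 1) / x ^ (D + 1)) (Set.Icc 1 Gc) := by
    apply strictMonoOn_of_deriv_pos (convex_Icc _ _)
    · apply ContinuousOn.div
      · exact (continuous_id.sub continuous_const).continuousOn
      · exact (continuous_pow _).continuousOn
      · intro x hx
        exact pow_ne_zero _ (by linarith [hx.1] : x ≠ 0)
    · intro x hx
      rw [interior_Icc] at hx
      have hx0 : (0 : ℝ) < x := lt_trans one_pos hx.1
      have hDx : (D : ℝ) * x < (D : ℝ) + 1 := by
        have h2 := hx.2
        calc (D : ℝ) * x < (D : ℝ) * Gc := by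
              exact (mul_lt_mul_iff_right₀ hd0).mpr h2
          _ = (D : ℝ) + 1 := hGcmul
      have hder : HasDerivAt (fun y : ℝ => (y - 1) / y ^ (D + 1))
          ((1 * x ^ (D + 1) - (x - 1) * (((D : ℝ) + 1) * x ^ D)) / (x ^ (D + 1)) ^ 2) x := by
        have h1 : HasDerivAt (fun y : ℝ => y - 1) 1 x := (hasDerivAt_id x).sub_const 1
        have h2 : HasDerivAt (fun y : ℝ => y ^ (D + 1)) (((D : ℝ) + 1) * x ^ D) x := by
          simpa using hasDerivAt_pow (D + 1) x
        exact h1.div h2 (by positivity)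
      rw [hder.deriv]
      apply div_pos
      · nlinarith [pow_pos hx0 D, pow_succ x D,
          mul_pos (pow_pos hx0 D) (by linarith : (0 : ℝ) < (D : ℝ) + 1 - (D : ℝ) * x)]
      · positivity
  -- neighborhood basic fact
  have hIoo : ∀ {a : ℝ}, a < gc → ∀ᶠ g in nhdsWithin gc (Set.Iio gc), g ∈ Set.Ioo a gc := by
    intro a ha
    have h1 : Set.Ioi a ∩ Set.Iio gc ∈ nhdsWithin gc (Set.Iio gc) :=
      Filter.inter_mem (mem_nhdsWithin_of_mem_nhds (Ioi_mem_nhds ha)) self_mem_nhdsWithin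
    rw [Set.Ioi_inter_Iio] at h1
    exact h1
  -- basic facts about G_LO on (0, gc)
  have hgfacts : ∀ g ∈ Set.Ioo (0 : ℝ) gc,
      1 ≤ G_LO g ∧ G_LO g < Gc ∧ g * (G_LO g) ^ (D + 1) = G_LO g - 1 := by
    intro g hg
    obtain ⟨hmem, heq⟩ := hG g ⟨le_of_lt hg.1, le_of_lt hg.2⟩
    have hx1 : 1 ≤ G_LO g := hmem.1
    have heq' : g * (G_LO g) ^ (D + 1) = G_LO g - 1 := by linarith
    refine ⟨hx1, ?_, heq'⟩
    rcases lt_or_eq_of_le hmem.2 with h | h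
    · exact h
    · exfalso
      rw [h] at heq'
      have hgg : g = gc := by
        have hpow : (Gc : ℝ) ^ (D + 1) ≠ 0 := by positivity
        exact mul_right_cancel₀ hpow (heq'.trans hfix.symm)
      linarith [hg.2]
  -- the left limit of G_LO at gc is Gc
  have hGt : Tendsto G_LO (nhdsWithin gc (Set.Iio gc)) (nhds Gc) := by
    rw [tendsto_order]
    constructor
    · intro b hb
      rcases lt_or_ge b 1 with hb1 | hb1
      · filter_upwards [hIoo hgc0] with g hg
        exact lt_of_lt_of_le hb1 (hgfacts g hg).1
      · have hb0 : (0 : ℝ) < b := lt_of_lt_of_le one_pos hb1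
        have hbmem : b ∈ Set.Icc (1 : ℝ) Gc := ⟨hb1, le_of_lt hb⟩
        have hfb_lt : (b - 1) / b ^ (D + 1) < gc := by
          have h := hmono hbmem ⟨le_of_lt hGc1, le_refl Gc⟩ hb
          simpa [hfGc] using h
        filter_upwards [hIoo hfb_lt, hIoo hgc0] with g hg hg0
        by_contra hcon
        push_neg at hcon
        obtain ⟨hx1, hxGc, heq⟩ := hgfacts g hg0
        have hx0 : (0 : ℝ) < G_LO g := lt_of_lt_of_le one_pos hx1
        have hle : (G_LO g - 1) / (G_LO g) ^ (D + 1) ≤ (b - 1) / b ^ (D + 1) :=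
          hmono.monotoneOn ⟨hx1, le_of_lt hxGc⟩ hbmem hcon
        have hgeq : g = (G_LO g - 1) / (G_LO g) ^ (D + 1) := by
          rw [eq_div_iff (by positivity)]
          exact heq
        rw [← hgeq] at hle
        linarith [hg.1]
    · intro b hb
      filter_upwards [hIoo hgc0] with g hg
      exact lt_trans (hgfacts g hg).2.1 hb
  -- value of the limit function at Gc
  have hval : Gc ^ (D + 1) / melS D Gc Gc = 2 * ((D : ℝ) + 1) / (D : ℝ) ^ 3 := by
    rw [melS_self hD]
    have hsplit : Gc ^ (D + 1) = Gc ^ (D - 1) * Gc ^ 2 := by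
      rw [← pow_add]; congr 1; omega
    have hcancel : Gc ^ (D - 1) ≠ 0 := by positivity
    rw [hsplit, mul_comm ((D : ℝ) * ((D : ℝ) + 1) / 2) (Gc ^ (D - 1)),
      mul_div_mul_left _ _ hcancel]
    have h2 : Gc ^ 2 * (D : ℝ) ^ 2 = ((D : ℝ) + 1) ^ 2 := by
      have := hGcmul
      nlinarith [hGcmul]
    field_simp
    nlinarith [h2]
  -- continuity of the transformed function at Gc
  have hScont : ContinuousAt (fun x : ℝ => Real.sqrt (x ^ (D + 1) / melS D Gc x)) Gc := by
    apply Real.continuous_sqrt.continuousAt.comp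
    exact ContinuousAt.div (continuous_pow (D + 1)).continuousAt
      ((melS_cont D Gc).continuousAt) (ne_of_gt (melS_pos hD hGc0 hGc0))
  have hPhi : Tendsto (fun g : ℝ => Real.sqrt ((G_LO g) ^ (D + 1) / melS D Gc (G_LO g)))
      (nhdsWithin gc (Set.Iio gc)) (nhds (Real.sqrt (2 * ((D : ℝ) + 1) / (D : ℝ) ^ 3))) := by
    have h := hScont.tendsto.comp hGt
    rwa [hval] at h
  -- the two functions agree eventually
  apply hPhi.congr'
  filter_upwards [hIoo hgc0] with g hg
  obtain ⟨hx1, hxGc, heq⟩ := hgfacts g hg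
  set x := G_LO g with hx_def
  have hx0 : (0 : ℝ) < x := lt_of_lt_of_le one_pos hx1
  have hxp : (0 : ℝ) < x ^ (D + 1) := by positivity
  have hxpne : x ^ (D + 1) ≠ 0 := ne_of_gt hxp
  have hS : 0 < melS D Gc x := melS_pos hD hGc0 hx0
  have hGx : (0 : ℝ) < Gc - x := by linarith
  have h1 : 1 - g / gc = (Gc - x) ^ 2 * (melS D Gc x / x ^ (D + 1)) := by
    have hp := hP x
    field_simp
    linear_combination hp - heq
  rw [h1, Real.sqrt_mul (sq_nonneg _), Real.sqrt_sq (le_of_lt hGx)]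
  rw [div_mul_cancel_left₀ (ne_of_gt hGx), ← Real.sqrt_inv, inv_div]
end

section
/- Let D ≥ 3 be an integer, g_c := D^D/(D+1)^{D+1}, and let G_LO : [0, g_c] → ℝ assign to each g the unique solution G ∈ [1, (D+1)/D] of G = 1 + g·G^{D+1}. Define the next-to-leading-order 2-point function for 0 < g < g_c by G_NLO(g) := (D(D+1)/2)·(Σ_{ℓ≥1} g^{2ℓ}·G_LO(g)^{2ℓ(D+1)+1}) / (1 − g·D·G_LO(g)^{D+1}). Then G_NLO(g) = (D(D+1)/2)·g²·G_LO(g)^{2D+2} / ((2 − G_LO(g))·(1 − g·D·G_LO(g)^{D+1})), and moreover G_NLO(g) = (D/2)·g²·(2 − G_LO(g))^{−1}·(d/dg)(G_LO(g)^{D+1}). -/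
/-!
Solving the melonic equation for the coupling, `g = (G - 1) / G ^ (D + 1)`, exhibits `G_LO` as the
inverse of a function that increases strictly on `[1, (D + 1) / D]`, with derivative
`(D + 1 - D G) / G ^ (D + 2)`. Hence `G_LO` is differentiable on `(0, g_c)` with
`G_LO' = G ^ (D + 2) / (D + 1 - D G)`, and `D + 1 - D G = 1 - g D G ^ (D + 1)` by the
equation. Every term of the NLO series equals `G (g G ^ (D + 1)) ^ (2ℓ) = G (G - 1) ^ (2ℓ)`, so
the series is geometric with ratio `(G - 1) ^ 2 < 1` and sums to
`(G - 1) ^ 2 / (2 - G) = g ^ 2 G ^ (2D + 2) / (2 - G)`.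
-/

open Set Filter Topology

namespace Melonic

noncomputable def criticalCoupling (D : ℕ) : ℝ := (D : ℝ) ^ D / ((D : ℝ) + 1) ^ (D + 1)

noncomputable def criticalTwoPoint (D : ℕ) : ℝ := ((D : ℝ) + 1) / D

noncomputable def coupling (D : ℕ) (G : ℝ) : ℝ := (G - 1) / G ^ (D + 1)

def IsLeadingOrder (D : ℕ) (G : ℝ → ℝ) : Prop :=
  ∀ g ∈ Icc (0 : ℝ) (criticalCoupling D),
    G g ∈ Icc (1 : ℝ) (criticalTwoPoint D) ∧ G g = 1 + g * G g ^ (D + 1)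

variable {D : ℕ}

lemma coupling_eq_iff {G g : ℝ} (hG : G ≠ 0) :
    coupling D G = g ↔ G = 1 + g * G ^ (D + 1) := by
  rw [coupling, div_eq_iff (pow_ne_zero _ hG)]
  constructor <;> intro h <;> linarith

lemma coupling_criticalTwoPoint (hD : D ≠ 0) :
    coupling D (criticalTwoPoint D) = criticalCoupling D := by
  have hD' : (D : ℝ) ≠ 0 := Nat.cast_ne_zero.mpr hD
  rw [coupling, criticalTwoPoint, criticalCoupling, div_pow]
  field_simp
  ring

lemma criticalTwoPoint_le_two (hD : D ≠ 0) : criticalTwoPoint D ≤ 2 := by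
  have hD' : (1 : ℝ) ≤ D := Nat.one_le_cast.mpr (Nat.one_le_iff_ne_zero.mpr hD)
  rw [criticalTwoPoint, div_le_iff₀ (by linarith)]
  linarith

lemma natCast_mul_lt_of_lt_criticalTwoPoint {x : ℝ} (hx : x < criticalTwoPoint D) :
    D * x < D + 1 := by
  rcases Nat.eq_zero_or_pos D with rfl | hD
  · simp
  · exact (lt_div_iff₀' (Nat.cast_pos.mpr hD)).mp hx

lemma hasDerivAt_coupling (D : ℕ) {G : ℝ} (hG : G ≠ 0) :
    HasDerivAt (coupling D) ((D + 1 - D * G) / G ^ (D + 2)) G := by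
  have hpow : HasDerivAt (fun G : ℝ => G ^ (D + 1)) ((D + 1 : ℕ) * G ^ D) G :=
    hasDerivAt_pow _ G
  refine (((hasDerivAt_id G).sub_const 1).div hpow (pow_ne_zero _ hG)).congr_deriv ?_
  rw [div_eq_div_iff (pow_ne_zero _ (pow_ne_zero _ hG)) (pow_ne_zero _ hG)]
  push_cast [id]
  ring

lemma strictMonoOn_coupling (D : ℕ) :
    StrictMonoOn (coupling D) (Ioc 0 (criticalTwoPoint D)) := by
  refine strictMonoOn_of_deriv_pos (convex_Ioc _ _) ?_ fun x hx => ?_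
  · exact ContinuousOn.div (by fun_prop) (by fun_prop) fun x hx => pow_ne_zero _ hx.1.ne'
  · rw [interior_Ioc] at hx
    rw [(hasDerivAt_coupling D hx.1.ne').deriv]
    have := natCast_mul_lt_of_lt_criticalTwoPoint hx.2
    exact div_pos (by linarith) (pow_pos hx.1 _)

lemma strictMonoOn_coupling_Icc (D : ℕ) :
    StrictMonoOn (coupling D) (Icc 1 (criticalTwoPoint D)) :=
  (strictMonoOn_coupling D).mono fun _ hx => ⟨zero_lt_one.trans_le hx.1, hx.2⟩

lemma mapsTo_coupling (hD : D ≠ 0) :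
    MapsTo (coupling D) (Icc 1 (criticalTwoPoint D)) (Icc 0 (criticalCoupling D)) := by
  intro x hx
  refine ⟨div_nonneg (by linarith [hx.1]) (pow_nonneg (by linarith [hx.1]) _), ?_⟩
  rw [← coupling_criticalTwoPoint hD]
  exact (strictMonoOn_coupling_Icc D).monotoneOn hx ⟨hx.1.trans hx.2, le_rfl⟩ hx.2

lemma hasSum_nlo_series {g G : ℝ} (hx : |g * G ^ (D + 1)| < 1) :
    HasSum (fun ℓ : ℕ => g ^ (2 * (ℓ + 1)) * G ^ (2 * (ℓ + 1) * (D + 1) + 1))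
      (G * (g * G ^ (D + 1)) ^ 2 / (1 - (g * G ^ (D + 1)) ^ 2)) := by
  set x := g * G ^ (D + 1)
  have hx2 : |x ^ 2| < 1 := by
    rw [abs_pow]
    exact pow_lt_one₀ (abs_nonneg x) hx two_ne_zero
  have hterm (ℓ : ℕ) :
      g ^ (2 * (ℓ + 1)) * G ^ (2 * (ℓ + 1) * (D + 1) + 1) = G * x ^ 2 * (x ^ 2) ^ ℓ := by
    simp only [x]
    ring
  simpa only [hterm, div_eq_mul_inv] using
    (hasSum_geometric_of_abs_lt_one hx2).mul_left (G * x ^ 2)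

namespace IsLeadingOrder

variable {G : ℝ → ℝ}

lemma mapsTo (h : IsLeadingOrder D G) :
    MapsTo G (Icc 0 (criticalCoupling D)) (Icc 1 (criticalTwoPoint D)) :=
  fun g hg => (h g hg).1

lemma leftInvOn (h : IsLeadingOrder D G) :
    LeftInvOn (coupling D) G (Icc 0 (criticalCoupling D)) := fun g hg =>
  (coupling_eq_iff (zero_lt_one.trans_le (h g hg).1.1).ne').mpr (h g hg).2

lemma monotoneOn (h : IsLeadingOrder D G) : MonotoneOn G (Icc 0 (criticalCoupling D)) :=
  fun _ hx _ hy hxy =>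
    ((strictMonoOn_coupling_Icc D).le_iff_le (h.mapsTo hx) (h.mapsTo hy)).mp
      (by rwa [h.leftInvOn hx, h.leftInvOn hy])

lemma surjOn (h : IsLeadingOrder D G) (hD : D ≠ 0) :
    SurjOn G (Icc 0 (criticalCoupling D)) (Icc 1 (criticalTwoPoint D)) :=
  RightInvOn.surjOn
    ((strictMonoOn_coupling_Icc D).injOn.rightInvOn_of_leftInvOn h.leftInvOn
      (mapsTo_coupling hD) h.mapsTo)
    (mapsTo_coupling hD)

lemma one_lt (h : IsLeadingOrder D G) {g : ℝ} (hg : g ∈ Ioc 0 (criticalCoupling D)) :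
    1 < G g := by
  obtain ⟨⟨h1, -⟩, heq⟩ := h g (Ioc_subset_Icc_self hg)
  have : 0 < g * G g ^ (D + 1) := mul_pos hg.1 (pow_pos (zero_lt_one.trans_le h1) _)
  linarith

lemma lt_criticalTwoPoint (h : IsLeadingOrder D G) (hD : D ≠ 0) {g : ℝ}
    (hg : g ∈ Ico 0 (criticalCoupling D)) : G g < criticalTwoPoint D := by
  refine (h g (Ico_subset_Icc_self hg)).1.2.lt_of_ne fun hT => hg.2.ne ?_
  rw [← h.leftInvOn (Ico_subset_Icc_self hg), hT, coupling_criticalTwoPoint hD]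

lemma continuousAt (h : IsLeadingOrder D G) (hD : D ≠ 0) {g : ℝ}
    (hg : g ∈ Ioo 0 (criticalCoupling D)) : ContinuousAt G g := by
  refine continuousAt_of_monotoneOn_of_image_mem_nhds h.monotoneOn (Icc_mem_nhds hg.1 hg.2) ?_
  exact mem_of_superset (Icc_mem_nhds (h.one_lt (Ioo_subset_Ioc_self hg))
    (h.lt_criticalTwoPoint hD (Ioo_subset_Ico_self hg))) (h.surjOn hD)

lemma hasDerivAt (h : IsLeadingOrder D G) (hD : D ≠ 0) {g : ℝ}
    (hg : g ∈ Ioo 0 (criticalCoupling D)) :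
    HasDerivAt G (G g ^ (D + 2) / (D + 1 - D * G g)) g := by
  have hG0 : G g ≠ 0 := (zero_lt_one.trans (h.one_lt (Ioo_subset_Ioc_self hg))).ne'
  have hslope : (D : ℝ) + 1 - D * G g ≠ 0 :=
    (sub_pos.mpr (natCast_mul_lt_of_lt_criticalTwoPoint
      (h.lt_criticalTwoPoint hD (Ioo_subset_Ico_self hg)))).ne'
  rw [← inv_div]
  exact HasDerivAt.of_local_left_inverse (h.continuousAt hD hg) (hasDerivAt_coupling D hG0)
    (div_ne_zero hslope (pow_ne_zero _ hG0))
    (eventually_of_mem (Icc_mem_nhds hg.1 hg.2) h.leftInvOn)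

end IsLeadingOrder

end Melonic

open Melonic

/-- Let `D ≥ 3`, `g_c := D^D/(D+1)^(D+1)`, `G_LO` the leading-order melonic
2-point function, and for `0 < g < g_c` define
`G_NLO(g) := (D(D+1)/2)·(Σ_{ℓ≥1} g^(2ℓ)·G_LO(g)^(2ℓ(D+1)+1)) / (1 − g·D·G_LO(g)^(D+1))`.
Then `G_NLO(g) = (D(D+1)/2)·g²·G_LO(g)^(2D+2) / ((2 − G_LO(g))·(1 − g·D·G_LO(g)^(D+1)))`, and
`G_NLO(g) = (D/2)·g²·(2 − G_LO(g))⁻¹·(d/dg)(G_LO(g)^(D+1))`. -/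
theorem nlo_two_point_closed_form (D : ℕ) (hD : 3 ≤ D) (G_LO G_NLO : ℝ → ℝ)
    (hG : ∀ g ∈ Set.Icc (0 : ℝ) ((D : ℝ) ^ D / ((D : ℝ) + 1) ^ (D + 1)),
      G_LO g ∈ Set.Icc (1 : ℝ) (((D : ℝ) + 1) / D) ∧ G_LO g = 1 + g * (G_LO g) ^ (D + 1))
    (hN : ∀ g ∈ Set.Ioo (0 : ℝ) ((D : ℝ) ^ D / ((D : ℝ) + 1) ^ (D + 1)),
      G_NLO g = ((D : ℝ) * ((D : ℝ) + 1) / 2) *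
        (∑' ℓ : ℕ, g ^ (2 * (ℓ + 1)) * (G_LO g) ^ (2 * (ℓ + 1) * (D + 1) + 1)) /
        (1 - g * D * (G_LO g) ^ (D + 1))) :
    ∀ g ∈ Set.Ioo (0 : ℝ) ((D : ℝ) ^ D / ((D : ℝ) + 1) ^ (D + 1)),
      G_NLO g = ((D : ℝ) * ((D : ℝ) + 1) / 2) * g ^ 2 * (G_LO g) ^ (2 * D + 2) /
        ((2 - G_LO g) * (1 - g * D * (G_LO g) ^ (D + 1))) ∧
      G_NLO g = ((D : ℝ) / 2) * g ^ 2 * (2 - G_LO g)⁻¹ *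
        deriv (fun t => (G_LO t) ^ (D + 1)) g := by
  intro g hg
  have hD0 : D ≠ 0 := by omega
  have hLO : IsLeadingOrder D G_LO := hG
  set G := G_LO g
  have hG1 : 1 < G := hLO.one_lt (Ioo_subset_Ioc_self hg)
  have hGT : G < criticalTwoPoint D := hLO.lt_criticalTwoPoint hD0 (Ioo_subset_Ico_self hg)
  have hG2 : G < 2 := hGT.trans_le (criticalTwoPoint_le_two hD0)
  have hslope : (0 : ℝ) < D + 1 - D * G := sub_pos.mpr (natCast_mul_lt_of_lt_criticalTwoPoint hGT)
  have hx : g * G ^ (D + 1) = G - 1 := by linarith [(hG g (Ioo_subset_Icc_self hg)).2]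
  have hsum : ∑' ℓ : ℕ, g ^ (2 * (ℓ + 1)) * G ^ (2 * (ℓ + 1) * (D + 1) + 1) =
      g ^ 2 * G ^ (2 * D + 2) / (2 - G) := by
    rw [(hasSum_nlo_series (by rw [hx, abs_lt]; constructor <;> linarith)).tsum_eq,
      show g ^ 2 * G ^ (2 * D + 2) = (g * G ^ (D + 1)) ^ 2 by ring, hx,
      show 1 - (G - 1) ^ 2 = G * (2 - G) by ring, mul_div_mul_left _ _ (by positivity)]
  have hden : 1 - g * D * G ^ (D + 1) = D + 1 - D * G := by linear_combination -(D : ℝ) * hx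
  have hderiv : deriv (fun t => G_LO t ^ (D + 1)) g =
      (D + 1) * G ^ D * (G ^ (D + 2) / (D + 1 - D * G)) := by
    rw [((hLO.hasDerivAt hD0 hg).fun_pow (D + 1)).deriv, add_tsub_cancel_right]
    push_cast
    ring
  have hfirst : G_NLO g = (D * (D + 1) / 2 : ℝ) * g ^ 2 * G ^ (2 * D + 2) /
      ((2 - G) * (1 - g * D * G ^ (D + 1))) := by
    rw [hN g hg, hsum, mul_div_assoc', div_div, ← mul_assoc]
  refine ⟨hfirst, ?_⟩
  rw [hfirst, hderiv, hden]
  field_simp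
  ring
end

section
/- Let D ≥ 3 be an integer, g_c := D^D/(D+1)^{D+1}, and define G_NLO(g) := (D(D+1)/2)·g²·G_LO(g)^{2D+2} / ((2 − G_LO(g))·(1 − g·D·G_LO(g)^{D+1})) for 0 ≤ g < g_c, where G_LO(g) is the unique solution G ∈ [1, (D+1)/D] of G = 1 + g·G^{D+1}. Then lim_{g→g_c⁻} √(1 − g/g_c)·G_NLO(g) = √(D(D+1)/8)/(D − 1); in particular G_NLO diverges like (1 − g/g_c)^{−1/2} at the critical coupling, in contrast to the leading order which remains bounded. -/
/-!
The leading order solves `g = (G - 1) / G ^ (D + 1)`, whose maximum on `[1, ∞)` is `g_c`, attained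
at `G_c = (D + 1) / D`. Hence `g_c x ^ (D + 1) - x + 1` has a double root at `G_c`, and along the
melonic curve `1 - g / g_c = (G_c - G) ^ 2 Q(G) / G ^ (D + 1)` for an explicit polynomial `Q` with
`Q(G_c) = D (D + 1) / 2 · G_c ^ (D - 1)`. The same curve turns the NLO denominator
`1 - g D G ^ (D + 1)` into `D (G_c - G)`, so `√(1 - g / g_c) · G_NLO` is a continuous function of
`(g, G)` near `(g_c, G_c)`; and `G → G_c` because `(G_c - G) ^ 2 ≤ (1 - g / g_c) G_c ^ (D + 1)`.
-/

open Finset Filter Topology Set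

section PowTaylorQuot

variable {R : Type*} [CommRing R]

def powTaylorQuot (n : ℕ) (c x : R) : R :=
  ∑ i ∈ range (n + 1), c ^ (n - i) * ∑ j ∈ range i, x ^ j * c ^ (i - 1 - j)

theorem pow_succ_sub_taylor_eq (n : ℕ) (c x : R) :
    x ^ (n + 1) - c ^ (n + 1) - (n + 1) * c ^ n * (x - c) =
      (x - c) ^ 2 * powTaylorQuot n c x := by
  have hgeom : (x - c) * ∑ i ∈ range (n + 1), c ^ (n - i) * x ^ i =
      x ^ (n + 1) - c ^ (n + 1) := by
    rw [← geom_sum₂_mul, mul_comm]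
    refine congrArg (· * _) (sum_congr rfl fun i _ => ?_)
    rw [mul_comm, Nat.add_sub_cancel]
  have hinner : ∀ i ∈ range (n + 1), c ^ (n - i) * c ^ i = c ^ n := fun i hi => by
    rw [← pow_add, Nat.sub_add_cancel (Nat.lt_succ_iff.mp (mem_range.mp hi))]
  have hquot : ∑ i ∈ range (n + 1), c ^ (n - i) * (x ^ i - c ^ i) =
      (x - c) * powTaylorQuot n c x := by
    rw [powTaylorQuot, mul_sum]
    refine sum_congr rfl fun i _ => ?_
    rw [← geom_sum₂_mul]; ring
  calc x ^ (n + 1) - c ^ (n + 1) - (n + 1) * c ^ n * (x - c)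
      = (x - c) * ∑ i ∈ range (n + 1), c ^ (n - i) * x ^ i
          - (x - c) * ∑ i ∈ range (n + 1), c ^ (n - i) * c ^ i := by
        rw [hgeom, sum_congr rfl hinner, sum_const, card_range, nsmul_eq_mul]
        push_cast; ring
    _ = (x - c) ^ 2 * powTaylorQuot n c x := by
        rw [← mul_sub, ← sum_sub_distrib]
        simp only [← mul_sub]
        rw [hquot]; ring

theorem two_mul_powTaylorQuot_self (n : ℕ) (c : R) :
    2 * powTaylorQuot n c c = n * (n + 1) * c ^ (n - 1) := by
  have hterm : ∀ i ∈ range (n + 1),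
      c ^ (n - i) * ∑ j ∈ range i, c ^ j * c ^ (i - 1 - j) = i * c ^ (n - 1) := by
    intro i hi
    have hin : i ≤ n := Nat.lt_succ_iff.mp (mem_range.mp hi)
    rcases Nat.eq_zero_or_pos i with rfl | hi0
    · simp
    have hpow : ∀ j ∈ range i, c ^ j * c ^ (i - 1 - j) = c ^ (i - 1) := fun j hj => by
      rw [← pow_add, Nat.add_sub_cancel' (by have := mem_range.mp hj; omega)]
    rw [sum_congr rfl hpow, sum_const, card_range, nsmul_eq_mul, mul_left_comm, ← pow_add]
    congr 2; omega
  have hgauss : 2 * ∑ i ∈ range (n + 1), (i : R) = n * (n + 1) := by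
    have := congrArg (Nat.cast (R := R)) (sum_range_id_mul_two (n + 1))
    push_cast at this
    rw [mul_comm, this]; ring
  rw [powTaylorQuot, sum_congr rfl hterm, ← sum_mul, ← mul_assoc, hgauss]

theorem continuous_powTaylorQuot [TopologicalSpace R] [IsTopologicalRing R] (n : ℕ) (c : R) :
    Continuous (powTaylorQuot n c) := by
  unfold powTaylorQuot; fun_prop

theorem one_le_powTaylorQuot [PartialOrder R] [IsOrderedRing R] {n : ℕ} {c x : R}
    (hn : n ≠ 0) (hc : 1 ≤ c) (hx : 0 ≤ x) : 1 ≤ powTaylorQuot n c x := by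
  have hc0 : 0 ≤ c := zero_le_one.trans hc
  calc (1 : R) ≤ c ^ (n - 1) := one_le_pow₀ hc
    _ = c ^ (n - 1) * ∑ j ∈ range 1, x ^ j * c ^ (1 - 1 - j) := by simp
    _ ≤ powTaylorQuot n c x :=
        single_le_sum (f := fun i => c ^ (n - i) * ∑ j ∈ range i, x ^ j * c ^ (i - 1 - j))
          (fun i _ => mul_nonneg (pow_nonneg hc0 _)
            (sum_nonneg fun j _ => mul_nonneg (pow_nonneg hx _) (pow_nonneg hc0 _)))
          (mem_range.mpr (by omega))

end PowTaylorQuot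

namespace MelonicCritical

noncomputable def critCoupling (D : ℕ) : ℝ := (D : ℝ) ^ D / ((D : ℝ) + 1) ^ (D + 1)

noncomputable def critG (D : ℕ) : ℝ := ((D : ℝ) + 1) / D

variable {D : ℕ}

theorem critCoupling_pos (hD : D ≠ 0) : 0 < critCoupling D := by
  unfold critCoupling; positivity

theorem critG_pos (hD : D ≠ 0) : 0 < critG D := by
  unfold critG; positivity

theorem critG_lt_two (hD : 2 ≤ D) : critG D < 2 := by
  have : (2 : ℝ) ≤ D := by exact_mod_cast hD
  rw [critG, div_lt_iff₀ (by positivity)]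
  linarith

theorem critG_sub_inv (hD : D ≠ 0) : critG D - (D : ℝ)⁻¹ = 1 := by
  have : (D : ℝ) ≠ 0 := Nat.cast_ne_zero.mpr hD
  rw [critG]; field_simp; ring

theorem critCoupling_mul_critG_pow_succ (hD : D ≠ 0) :
    critCoupling D * critG D ^ (D + 1) = (D : ℝ)⁻¹ := by
  have : (D : ℝ) ≠ 0 := Nat.cast_ne_zero.mpr hD
  rw [critCoupling, critG, div_pow]
  field_simp
  ring

theorem critCoupling_mul_critG_pow (hD : D ≠ 0) :
    critCoupling D * ((D + 1) * critG D ^ D) = 1 := by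
  have : (D : ℝ) ≠ 0 := Nat.cast_ne_zero.mpr hD
  rw [critCoupling, critG, div_pow]
  field_simp
  ring

theorem critCoupling_mul_pow_succ_sub_add_one (hD : D ≠ 0) (x : ℝ) :
    critCoupling D * x ^ (D + 1) - x + 1 =
      critCoupling D * ((x - critG D) ^ 2 * powTaylorQuot D (critG D) x) := by
  rw [← pow_succ_sub_taylor_eq]
  linear_combination critCoupling_mul_critG_pow_succ hD
    + (x - critG D) * critCoupling_mul_critG_pow hD - critG_sub_inv hD

theorem one_sub_div_critCoupling_eq (hD : D ≠ 0) {g G : ℝ} (hG0 : G ≠ 0)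
    (hG : G = 1 + g * G ^ (D + 1)) :
    1 - g / critCoupling D = (critG D - G) ^ 2 * (powTaylorQuot D (critG D) G / G ^ (D + 1)) := by
  have := (critCoupling_pos hD).ne'
  field_simp
  linear_combination critCoupling_mul_pow_succ_sub_add_one hD G + hG

theorem one_sub_mul_mul_pow_eq (hD : D ≠ 0) {g G : ℝ} (hG : G = 1 + g * G ^ (D + 1)) :
    1 - g * D * G ^ (D + 1) = D * (critG D - G) := by
  have : (D : ℝ) ≠ 0 := Nat.cast_ne_zero.mpr hD
  rw [critG]
  field_simp
  linear_combination (D : ℝ) * hG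

theorem sq_critG_sub_le (hD : D ≠ 0) {g G : ℝ} (hG1 : 1 ≤ G) (hGc : G ≤ critG D)
    (hG : G = 1 + g * G ^ (D + 1)) :
    (critG D - G) ^ 2 ≤ (1 - g / critCoupling D) * critG D ^ (D + 1) := by
  have hG0 : 0 < G := zero_lt_one.trans_le hG1
  have hquot : 1 ≤ powTaylorQuot D (critG D) G := one_le_powTaylorQuot hD (hG1.trans hGc) hG0.le
  have hpow : G ^ (D + 1) ≤ critG D ^ (D + 1) := pow_le_pow_left₀ hG0.le hGc _
  have hratio : 1 ≤ powTaylorQuot D (critG D) G / G ^ (D + 1) * critG D ^ (D + 1) := by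
    rw [div_mul_eq_mul_div, one_le_div (by positivity)]
    exact hpow.trans (le_mul_of_one_le_left ((pow_pos hG0 _).le.trans hpow) hquot)
  rw [one_sub_div_critCoupling_eq hD hG0.ne' hG, mul_assoc]
  exact le_mul_of_one_le_right (sq_nonneg _) hratio

theorem tendsto_critG (hD : D ≠ 0) {G : ℝ → ℝ}
    (hG : ∀ g ∈ Ico 0 (critCoupling D),
      G g ∈ Icc 1 (critG D) ∧ G g = 1 + g * G g ^ (D + 1)) :
    Tendsto G (𝓝[<] critCoupling D) (𝓝 (critG D)) := by
  set bound := fun g : ℝ => critG D - √((1 - g / critCoupling D) * critG D ^ (D + 1))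
  have hbound : Tendsto bound (𝓝[<] critCoupling D) (𝓝 (critG D)) := by
    have : Continuous bound := by fun_prop
    simpa [bound, (critCoupling_pos hD).ne'] using
      this.continuousWithinAt.tendsto (x := critCoupling D)
  refine tendsto_of_tendsto_of_tendsto_of_le_of_le' hbound tendsto_const_nhds ?_ ?_
  all_goals filter_upwards [Ico_mem_nhdsLT (critCoupling_pos hD)] with g hg
  · obtain ⟨⟨hG1, hGc⟩, hGeq⟩ := hG g hg
    have := Real.abs_le_sqrt (sq_critG_sub_le hD hG1 hGc hGeq)
    linarith [le_abs_self (critG D - G g)]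
  · exact (hG g hg).1.2

theorem sqrt_one_sub_div_critCoupling_mul_eq (hD : D ≠ 0) (a : ℝ) {g G : ℝ}
    (hg : g < critCoupling D) (hG0 : 0 < G) (hGc : G ≤ critG D) (hG : G = 1 + g * G ^ (D + 1)) :
    √(1 - g / critCoupling D) *
        (a * g ^ 2 * G ^ (2 * D + 2) / ((2 - G) * (1 - g * D * G ^ (D + 1)))) =
      √(powTaylorQuot D (critG D) G / G ^ (D + 1)) *
        (a * g ^ 2 * G ^ (2 * D + 2) / ((2 - G) * D)) := by
  have hcrit := one_sub_div_critCoupling_eq hD hG0.ne' hG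
  have hGlt : G < critG D := by
    refine hGc.lt_of_ne fun hGeq => ?_
    rw [hGeq, sub_self, zero_pow two_ne_zero, zero_mul, sub_eq_zero,
      eq_div_iff (critCoupling_pos hD).ne', one_mul] at hcrit
    exact hg.ne' hcrit
  have : (D : ℝ) ≠ 0 := Nat.cast_ne_zero.mpr hD
  have : critG D - G ≠ 0 := sub_ne_zero.mpr hGlt.ne'
  rw [hcrit, Real.sqrt_mul (sq_nonneg _), Real.sqrt_sq (sub_nonneg.mpr hGc),
    one_sub_mul_mul_pow_eq hD hG]
  field_simp

theorem critical_amplitude_eq (hD : 2 ≤ D) :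
    √(powTaylorQuot D (critG D) (critG D) / critG D ^ (D + 1)) *
        ((D : ℝ) * (D + 1) / 2 * critCoupling D ^ 2 * critG D ^ (2 * D + 2) /
          ((2 - critG D) * D)) =
      √((D : ℝ) * (D + 1) / 8) / (D - 1) := by
  have hD0 : D ≠ 0 := by omega
  have hD2 : (2 : ℝ) ≤ D := by exact_mod_cast hD
  have hquot : powTaylorQuot D (critG D) (critG D) / critG D ^ (D + 1) =
      D * (D + 1) / 2 * (D / (D + 1)) ^ 2 := by
    have hself : powTaylorQuot D (critG D) (critG D) = D * (D + 1) / 2 * critG D ^ (D - 1) := by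
      linear_combination two_mul_powTaylorQuot_self D (critG D) / 2
    rw [hself, show D + 1 = D - 1 + 2 by omega, pow_add, critG]
    field_simp
  have hsqrt : √((D : ℝ) * (D + 1) / 8) = √((D : ℝ) * (D + 1) / 2) / 2 := by
    rw [show (D : ℝ) * (D + 1) / 8 = (D * (D + 1) / 2) * (1 / 2) ^ 2 by ring,
      Real.sqrt_mul (by positivity), Real.sqrt_sq (by norm_num)]
    ring
  have hpow : critCoupling D ^ 2 * critG D ^ (2 * D + 2) = ((D : ℝ)⁻¹) ^ 2 := by
    rw [show 2 * D + 2 = (D + 1) * 2 by ring, pow_mul, ← mul_pow,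
      critCoupling_mul_critG_pow_succ hD0]
  have htwo : 2 - critG D = (D - 1) / D := by rw [critG]; field_simp; ring
  rw [hquot, Real.sqrt_mul (by positivity), Real.sqrt_sq (by positivity), hsqrt, htwo,
    mul_assoc _ (critCoupling D ^ 2), hpow]
  have : (D : ℝ) - 1 ≠ 0 := by linarith
  field_simp

end MelonicCritical

open MelonicCritical in
/-- Let `D ≥ 3`, `g_c := D^D/(D+1)^(D+1)`, `G_LO` the leading-order melonic
2-point function, and for `0 ≤ g < g_c` let
`G_NLO(g) := (D(D+1)/2)·g²·G_LO(g)^(2D+2) / ((2 − G_LO(g))·(1 − g·D·G_LO(g)^(D+1)))`.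
Then `lim_{g→g_c⁻} √(1 − g/g_c)·G_NLO(g) = √(D(D+1)/8)/(D − 1)`, i.e. `G_NLO` diverges like
`(1 − g/g_c)^(−1/2)` at the critical coupling. -/
theorem nlo_two_point_critical_divergence (D : ℕ) (hD : 3 ≤ D) (G_LO G_NLO : ℝ → ℝ)
    (hG : ∀ g ∈ Set.Icc (0 : ℝ) ((D : ℝ) ^ D / ((D : ℝ) + 1) ^ (D + 1)),
      G_LO g ∈ Set.Icc (1 : ℝ) (((D : ℝ) + 1) / D) ∧ G_LO g = 1 + g * (G_LO g) ^ (D + 1))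
    (hN : ∀ g ∈ Set.Ico (0 : ℝ) ((D : ℝ) ^ D / ((D : ℝ) + 1) ^ (D + 1)),
      G_NLO g = ((D : ℝ) * ((D : ℝ) + 1) / 2) * g ^ 2 * (G_LO g) ^ (2 * D + 2) /
        ((2 - G_LO g) * (1 - g * D * (G_LO g) ^ (D + 1)))) :
    Filter.Tendsto
      (fun g : ℝ => Real.sqrt (1 - g / ((D : ℝ) ^ D / ((D : ℝ) + 1) ^ (D + 1))) * G_NLO g)
      (nhdsWithin ((D : ℝ) ^ D / ((D : ℝ) + 1) ^ (D + 1))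
        (Set.Iio ((D : ℝ) ^ D / ((D : ℝ) + 1) ^ (D + 1))))
      (nhds (Real.sqrt ((D : ℝ) * ((D : ℝ) + 1) / 8) / ((D : ℝ) - 1))) := by
  have hD0 : D ≠ 0 := by omega
  have hGlim : Tendsto G_LO (𝓝[<] critCoupling D) (𝓝 (critG D)) :=
    tendsto_critG hD0 fun g hg => hG g (Ico_subset_Icc_self hg)
  have hglim : Tendsto (fun g : ℝ => g) (𝓝[<] critCoupling D) (𝓝 (critCoupling D)) :=
    tendsto_nhdsWithin_of_tendsto_nhds tendsto_id
  have hquot := (((continuous_powTaylorQuot D (critG D)).tendsto _).comp hGlim).div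
    (hGlim.pow (D + 1)) (pow_pos (critG_pos hD0) _).ne'
  have hden : (2 - critG D) * D ≠ 0 :=
    mul_ne_zero (sub_pos.mpr (critG_lt_two (by omega))).ne' (Nat.cast_ne_zero.mpr hD0)
  have hlim := hquot.sqrt.mul
    ((((tendsto_const_nhds (x := (D : ℝ) * (D + 1) / 2)).mul (hglim.pow 2)).mul
      (hGlim.pow (2 * D + 2))).div ((tendsto_const_nhds.sub hGlim).mul_const (D : ℝ)) hden)
  rw [critical_amplitude_eq (by omega)] at hlim
  refine hlim.congr' ?_
  filter_upwards [Ico_mem_nhdsLT (critCoupling_pos hD0)] with g hg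
  obtain ⟨⟨hG1, hGc⟩, hGeq⟩ := hG g (Ico_subset_Icc_self hg)
  rw [hN g hg]
  exact (sqrt_one_sub_div_critCoupling_mul_eq hD0 _ hg.2 (zero_lt_one.trans_le hG1) hGc hGeq).symm
end

section
/- Let D ≥ 3 be an integer, g_c := D^D/(D+1)^{D+1}, and define G_NLO(g) := (D(D+1)/2)·g²·G_LO(g)^{2D+2} / ((2 − G_LO(g))·(1 − g·D·G_LO(g)^{D+1})) for 0 ≤ g < g_c, where G_LO(g) is the unique solution G ∈ [1, (D+1)/D] of G = 1 + g·G^{D+1}. Define the next-to-leading-order free energy E_NLO(g) := ∫_0^g G_NLO(t)/t dt. Then E_NLO extends to a continuous function on [0, g_c], and lim_{g→g_c⁻} (E_NLO(g_c) − E_NLO(g)) / √(1 − g/g_c) = √(D(D+1)/2)/(D − 1); i.e., the next-to-leading-order free energy has critical behaviour (1 − g/g_c)^{2 − γ} with susceptibility exponent γ_NLO = 3/2. -/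
/-!
Change variables to `G = G_LO g ∈ [1, G*]`, `G* = (D+1)/D`: the melonic equation is inverted by
the increasing map `ψ G = (G - 1) / G^(D+1)` (`melonicCoupling`), with `ψ G* = g_c`. In this
variable `G_NLO g / g dg = H'(G) dG` for `H G = -(D(D+1)/4) log (G (2 - G))` (`nloFreeEnergyOfG`),
so `E_NLO = H ∘ G_LO`, which is continuous up to `g_c`. Since `ψ'(G*) = 0`, `1 - g/g_c` vanishes
quadratically in `G* - G` while `H G* - H G` vanishes linearly, which produces the square root.
-/

open Set Filter Topology Real

theorem continuousOn_Icc_of_monotoneOn_of_surjOn {f : ℝ → ℝ} {a b c d : ℝ}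
    (hf : MonotoneOn f (Icc a b)) (hmaps : MapsTo f (Icc a b) (Icc c d))
    (hsurj : SurjOn f (Icc a b) (Icc c d)) : ContinuousOn f (Icc a b) := by
  have hcont : Continuous hmaps.restrict :=
    Monotone.continuous_of_surjective (fun x y hxy => hf x.2 y.2 hxy)
      (hmaps.restrict_surjective_iff.2 hsurj)
  exact continuousOn_iff_continuous_domRestrict.2 (continuous_subtype_val.comp hcont)

theorem tendsto_sub_div_sq_nhdsLT {f k : ℝ → ℝ} {a : ℝ}
    (hf : ∀ᶠ x in 𝓝[<] a, HasDerivAt f ((a - x) * k x) x)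
    (hfa : ContinuousWithinAt f (Iio a) a) (hk : ContinuousWithinAt k (Iio a) a) :
    Tendsto (fun x => (f a - f x) / (a - x) ^ 2) (𝓝[<] a) (𝓝 (k a / 2)) := by
  refine HasDerivAt.lhopital_zero_nhdsLT (f' := fun x => -((a - x) * k x))
    (g' := fun x => -(2 * (a - x))) (hf.mono fun x hx => hx.const_sub (f a)) ?_ ?_ ?_ ?_ ?_
  · refine Eventually.of_forall fun x => ?_
    simpa using ((hasDerivAt_id x).const_sub a).fun_pow 2
  · filter_upwards [self_mem_nhdsWithin] with x (hx : x < a)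
    linarith
  · simpa using (tendsto_const_nhds (x := f a)).sub hfa
  · have : ContinuousWithinAt (fun x : ℝ => (a - x) ^ 2) (Iio a) a := by fun_prop
    simpa using this.tendsto
  · refine (hk.tendsto.div_const 2).congr' ?_
    filter_upwards [self_mem_nhdsWithin] with x (hx : x < a)
    have : a - x ≠ 0 := by linarith
    field_simp

theorem tendsto_sub_div_sqrt_nhdsLT {f h : ℝ → ℝ} {f' a m : ℝ}
    (hf : HasDerivWithinAt f f' (Iio a) a) (hm : 0 < m)
    (hh : Tendsto (fun x => h x / (a - x) ^ 2) (𝓝[<] a) (𝓝 m)) :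
    Tendsto (fun x => (f a - f x) / √(h x)) (𝓝[<] a) (𝓝 (f' / √m)) := by
  have hslope : Tendsto (fun x => (f a - f x) / (a - x)) (𝓝[<] a) (𝓝 f') := by
    have := hasDerivWithinAt_iff_tendsto_slope.1 hf
    rw [sdiff_singleton_eq_self self_notMem_Iio] at this
    refine this.congr fun x => ?_
    rw [slope_def_field, ← neg_sub (f a), ← neg_sub a, neg_div_neg_eq]
  have hsqrt : Tendsto (fun x => √(h x) / (a - x)) (𝓝[<] a) (𝓝 √m) := by
    refine ((continuous_sqrt.tendsto m).comp hh).congr' ?_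
    filter_upwards [self_mem_nhdsWithin] with x (hx : x < a)
    rw [Function.comp_apply, sqrt_div' _ (sq_nonneg _), sqrt_sq (by linarith)]
  refine (hslope.div hsqrt (sqrt_pos.2 hm).ne').congr' ?_
  filter_upwards [self_mem_nhdsWithin] with x (hx : x < a)
  exact div_div_div_cancel_right₀ (by linarith) _ _

namespace MelonicNLO

noncomputable def criticalCoupling (D : ℕ) : ℝ := (D : ℝ) ^ D / ((D : ℝ) + 1) ^ (D + 1)

noncomputable def criticalG (D : ℕ) : ℝ := ((D : ℝ) + 1) / D

noncomputable def melonicCoupling (D : ℕ) (u : ℝ) : ℝ := (u - 1) / u ^ (D + 1)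

noncomputable def nloTwoPoint (D : ℕ) (g u : ℝ) : ℝ :=
  ((D : ℝ) * ((D : ℝ) + 1) / 2) * g ^ 2 * u ^ (2 * D + 2) /
    ((2 - u) * (1 - g * D * u ^ (D + 1)))

noncomputable def nloFreeEnergyOfG (D : ℕ) (u : ℝ) : ℝ :=
  -((D : ℝ) * ((D : ℝ) + 1) / 4) * (log u + log (2 - u))

def IsMelonicSolution (D : ℕ) (G : ℝ → ℝ) : Prop :=
  ∀ g ∈ Icc 0 (criticalCoupling D), G g ∈ Icc 1 (criticalG D) ∧ G g = 1 + g * G g ^ (D + 1)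

variable {D : ℕ}

theorem criticalCoupling_pos (hD : 0 < D) : 0 < criticalCoupling D := by
  have hD' : (0 : ℝ) < D := by exact_mod_cast hD
  unfold criticalCoupling; positivity

theorem one_lt_criticalG (hD : 0 < D) : 1 < criticalG D := by
  have hD' : (0 : ℝ) < D := by exact_mod_cast hD
  rw [criticalG, lt_div_iff₀ hD']
  linarith

theorem criticalG_lt_two (hD : 1 < D) : criticalG D < 2 := by
  have hD' : (1 : ℝ) < D := by exact_mod_cast hD
  rw [criticalG, div_lt_iff₀ (by linarith)]
  linarith

theorem mul_criticalG_sub (hD : 0 < D) (u : ℝ) :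
    (D : ℝ) * (criticalG D - u) = (D : ℝ) + 1 - D * u := by
  have hD' : (D : ℝ) ≠ 0 := by positivity
  rw [criticalG]
  field_simp

theorem melonicCoupling_one : melonicCoupling D 1 = 0 := by simp [melonicCoupling]

theorem melonicCoupling_criticalG (hD : 0 < D) :
    melonicCoupling D (criticalG D) = criticalCoupling D := by
  have hD' : (0 : ℝ) < D := by exact_mod_cast hD
  rw [melonicCoupling, criticalG, criticalCoupling, div_pow, pow_succ (D : ℝ) D]
  field_simp
  ring

theorem hasDerivAt_melonicCoupling (hD : 0 < D) {u : ℝ} (hu : u ≠ 0) :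
    HasDerivAt (melonicCoupling D) (D * (criticalG D - u) / u ^ (D + 2)) u := by
  have h := ((hasDerivAt_id u).sub_const 1).div (hasDerivAt_pow (D + 1) u) (pow_ne_zero _ hu)
  refine h.congr_deriv ?_
  rw [mul_criticalG_sub hD, id]
  field_simp
  push_cast
  ring

theorem strictMonoOn_melonicCoupling (hD : 0 < D) :
    StrictMonoOn (melonicCoupling D) (Icc 1 (criticalG D)) := by
  refine strictMonoOn_of_hasDerivWithinAt_pos (convex_Icc _ _) ?_
    (fun u hu => (hasDerivAt_melonicCoupling hD ?_).hasDerivWithinAt) fun u hu => ?_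
  · exact fun u hu => ((hasDerivAt_melonicCoupling hD (by linarith [hu.1])).continuousAt
      ).continuousWithinAt
  · rw [interior_Icc] at hu; linarith [hu.1]
  · rw [interior_Icc] at hu
    have : 0 < criticalG D - u := by linarith [hu.2]
    have : 0 < u := by linarith [hu.1]
    positivity

theorem mapsTo_melonicCoupling (hD : 0 < D) :
    MapsTo (melonicCoupling D) (Icc 1 (criticalG D)) (Icc 0 (criticalCoupling D)) := by
  intro u hu
  have hmono := (strictMonoOn_melonicCoupling hD).monotoneOn
  have hle := (one_lt_criticalG hD).le
  exact ⟨melonicCoupling_one (D := D) ▸ hmono (left_mem_Icc.2 hle) hu hu.1,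
    melonicCoupling_criticalG hD ▸ hmono hu (right_mem_Icc.2 hle) hu.2⟩

theorem Icc_one_criticalG_subset (hD : 1 < D) : Icc 1 (criticalG D) ⊆ Ioo 0 2 :=
  fun _ hu => ⟨by linarith [hu.1], by linarith [hu.2, criticalG_lt_two hD]⟩

theorem criticalCoupling_mul_criticalG_pow (hD : 0 < D) :
    criticalCoupling D * criticalG D ^ (D + 2) = ((D : ℝ) + 1) / (D : ℝ) ^ 2 := by
  have hD' : (0 : ℝ) < D := by exact_mod_cast hD
  rw [criticalCoupling, criticalG, div_pow, pow_add (D : ℝ) D 2, pow_succ ((D : ℝ) + 1) (D + 1),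
    pow_succ ((D : ℝ) + 1) D]
  field_simp

theorem hasDerivAt_nloFreeEnergyOfG {u : ℝ} (hu0 : 0 < u) (hu2 : u < 2) :
    HasDerivAt (nloFreeEnergyOfG D)
      ((D : ℝ) * ((D : ℝ) + 1) / 2 * (u - 1) / (u * (2 - u))) u := by
  have h := ((hasDerivAt_log hu0.ne').add
    (((hasDerivAt_id' u).const_sub 2).log (by simp; linarith))).const_mul
    (-((D : ℝ) * ((D : ℝ) + 1) / 4))
  refine h.congr_deriv ?_
  have : 2 - u ≠ 0 := by linarith
  field_simp
  ring

theorem continuousOn_nloFreeEnergyOfG : ContinuousOn (nloFreeEnergyOfG D) (Ioo 0 2) :=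
  fun _ hu => (hasDerivAt_nloFreeEnergyOfG hu.1 hu.2).continuousAt.continuousWithinAt

theorem nloFreeEnergyOfG_one : nloFreeEnergyOfG D 1 = 0 := by norm_num [nloFreeEnergyOfG]

theorem tendsto_one_sub_melonicCoupling_div_sq (hD : 0 < D) :
    Tendsto (fun u => (1 - melonicCoupling D u / criticalCoupling D) / (criticalG D - u) ^ 2)
      (𝓝[<] criticalG D) (𝓝 ((D : ℝ) ^ 3 / (2 * ((D : ℝ) + 1)))) := by
  have hc := criticalCoupling_pos hD
  have hG0 : criticalG D ≠ 0 := by linarith [one_lt_criticalG hD]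
  have h := tendsto_sub_div_sq_nhdsLT (a := criticalG D)
    (f := fun u => melonicCoupling D u / criticalCoupling D)
    (k := fun u => D / (criticalCoupling D * u ^ (D + 2))) ?_
    ((hasDerivAt_melonicCoupling hD hG0).continuousAt.div_const _).continuousWithinAt
    (continuousAt_const.div (by fun_prop) (by positivity)).continuousWithinAt
  · have hD' : (0 : ℝ) < D := by exact_mod_cast hD
    rw [melonicCoupling_criticalG hD, div_self hc.ne', div_div,
      criticalCoupling_mul_criticalG_pow hD] at h
    convert h using 2
    field_simp
  · filter_upwards [Ioo_mem_nhdsLT (zero_lt_one.trans (one_lt_criticalG hD))] with u hu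
    refine ((hasDerivAt_melonicCoupling hD hu.1.ne').div_const _).congr_deriv ?_
    have : u ≠ 0 := hu.1.ne'
    field_simp

theorem tendsto_nloFreeEnergyOfG_critical (hD : 1 < D) :
    Tendsto (fun u => (nloFreeEnergyOfG D (criticalG D) - nloFreeEnergyOfG D u) /
        √(1 - melonicCoupling D u / criticalCoupling D))
      (𝓝[<] criticalG D) (𝓝 (√((D : ℝ) * ((D : ℝ) + 1) / 2) / ((D : ℝ) - 1))) := by
  have hD0 : 0 < D := by omega
  have hD' : (1 : ℝ) < D := by exact_mod_cast hD
  have hm : (0 : ℝ) < (D : ℝ) ^ 3 / (2 * ((D : ℝ) + 1)) := by positivity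
  have h := tendsto_sub_div_sqrt_nhdsLT
    (hasDerivAt_nloFreeEnergyOfG (D := D) (by linarith [one_lt_criticalG hD0]) (criticalG_lt_two hD)
      ).hasDerivWithinAt hm (tendsto_one_sub_melonicCoupling_div_sq hD0)
  convert h using 2
  have hsqrt : √((D : ℝ) ^ 3 / (2 * ((D : ℝ) + 1))) * √((D : ℝ) * ((D : ℝ) + 1) / 2) =
      (D : ℝ) ^ 2 / 2 := by
    rw [← sqrt_mul hm.le, ← sqrt_sq (by positivity : (0 : ℝ) ≤ (D : ℝ) ^ 2 / 2)]
    congr 1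
    field_simp
  rw [eq_div_iff (sqrt_pos.2 hm).ne', div_mul_eq_mul_div, mul_comm _ √_, hsqrt, criticalG]
  have : (D : ℝ) - 1 ≠ 0 := by linarith
  have : (D : ℝ) ≠ 0 := by linarith
  have h2 : 2 - ((D : ℝ) + 1) / D = ((D : ℝ) - 1) / D := by field_simp; ring
  rw [h2]
  field_simp
  ring

namespace IsMelonicSolution

variable {G : ℝ → ℝ} {g : ℝ}

theorem mapsTo (hG : IsMelonicSolution D G) :
    MapsTo G (Icc 0 (criticalCoupling D)) (Icc 1 (criticalG D)) :=
  fun g hg => (hG g hg).1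

theorem leftInvOn (hG : IsMelonicSolution D G) :
    LeftInvOn (melonicCoupling D) G (Icc 0 (criticalCoupling D)) := by
  intro g hg
  obtain ⟨⟨h1, -⟩, heq⟩ := hG g hg
  rw [melonicCoupling, div_eq_iff (by positivity)]
  linarith

theorem one_sub_mul_pow_eq (hG : IsMelonicSolution D G) (hD : 0 < D)
    (hg : g ∈ Icc 0 (criticalCoupling D)) :
    1 - g * D * G g ^ (D + 1) = D * (criticalG D - G g) := by
  rw [mul_criticalG_sub hD]
  linear_combination (D : ℝ) * (hG g hg).2

theorem apply_melonicCoupling (hG : IsMelonicSolution D G) (hD : 0 < D) {u : ℝ}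
    (hu : u ∈ Icc 1 (criticalG D)) :
    G (melonicCoupling D u) = u :=
  (strictMonoOn_melonicCoupling hD).injOn (hG.mapsTo (mapsTo_melonicCoupling hD hu)) hu
    (hG.leftInvOn (mapsTo_melonicCoupling hD hu))

theorem apply_zero (hG : IsMelonicSolution D G) (hD : 0 < D) : G 0 = 1 := by
  simpa using (hG 0 ⟨le_rfl, (criticalCoupling_pos hD).le⟩).2

theorem apply_criticalCoupling (hG : IsMelonicSolution D G) (hD : 0 < D) :
    G (criticalCoupling D) = criticalG D := by
  simpa [melonicCoupling_criticalG hD] using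
    hG.apply_melonicCoupling hD (right_mem_Icc.2 (one_lt_criticalG hD).le)

theorem lt_criticalG (hG : IsMelonicSolution D G) (hD : 0 < D)
    (hg : g ∈ Ico 0 (criticalCoupling D)) : G g < criticalG D := by
  refine lt_of_le_of_ne (hG.mapsTo (Ico_subset_Icc_self hg)).2 fun h => hg.2.ne ?_
  rw [← hG.leftInvOn (Ico_subset_Icc_self hg), h, melonicCoupling_criticalG hD]

theorem continuousOn (hG : IsMelonicSolution D G) (hD : 0 < D) :
    ContinuousOn G (Icc 0 (criticalCoupling D)) :=
  continuousOn_Icc_of_monotoneOn_of_surjOn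
    (Function.monotoneOn_of_rightInvOn_of_mapsTo (strictMonoOn_melonicCoupling hD).monotoneOn
      hG.leftInvOn hG.mapsTo)
    hG.mapsTo fun _ hu => ⟨_, mapsTo_melonicCoupling hD hu, hG.apply_melonicCoupling hD hu⟩

theorem hasDerivAt (hG : IsMelonicSolution D G) (hD : 0 < D)
    (hg : g ∈ Ioo 0 (criticalCoupling D)) :
    HasDerivAt G ((D * (criticalG D - G g) / G g ^ (D + 2))⁻¹) g := by
  have h1 := (hG.mapsTo (Ioo_subset_Icc_self hg)).1
  have hlt := hG.lt_criticalG hD (Ioo_subset_Ico_self hg)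
  refine HasDerivAt.of_local_left_inverse
    ((hG.continuousOn hD).continuousAt (Icc_mem_nhds hg.1 hg.2))
    (hasDerivAt_melonicCoupling hD (by linarith)) ?_ ?_
  · have : (0 : ℝ) < D := by exact_mod_cast hD
    have : 0 < criticalG D - G g := by linarith
    have : 0 < G g := by linarith
    positivity
  · filter_upwards [Ioo_mem_nhds hg.1 hg.2] with x hx using hG.leftInvOn (Ioo_subset_Icc_self hx)

theorem tendsto_nhdsLT (hG : IsMelonicSolution D G) (hD : 0 < D) :
    Tendsto G (𝓝[<] criticalCoupling D) (𝓝[<] criticalG D) := by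
  have hc := criticalCoupling_pos hD
  refine tendsto_nhdsWithin_iff.2 ⟨?_, ?_⟩
  · have h := ((hG.continuousOn hD) _ (right_mem_Icc.2 hc.le)).mono_of_mem_nhdsWithin
      (Icc_mem_nhdsLT hc)
    rw [ContinuousWithinAt, hG.apply_criticalCoupling hD] at h
    exact h
  · filter_upwards [Ioo_mem_nhdsLT hc] with g hg using hG.lt_criticalG hD (Ioo_subset_Ico_self hg)
theorem nloTwoPoint_div_nonneg (hG : IsMelonicSolution D G) (hD : 1 < D)
    (hg : g ∈ Ioo 0 (criticalCoupling D)) : 0 ≤ nloTwoPoint D g (G g) / g := by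
  have hD0 : 0 < D := by omega
  have hlt := hG.lt_criticalG hD0 (Ioo_subset_Ico_self hg)
  have h2 : 0 < 2 - G g := by linarith [criticalG_lt_two hD]
  have hc : 0 < (D : ℝ) * (criticalG D - G g) := mul_pos (by exact_mod_cast hD0) (by linarith)
  have : 0 < G g := by linarith [(hG.mapsTo (Ioo_subset_Icc_self hg)).1]
  rw [nloTwoPoint, hG.one_sub_mul_pow_eq hD0 (Ioo_subset_Icc_self hg)]
  exact div_nonneg (div_nonneg (by positivity) (mul_pos h2 hc).le) hg.1.le

theorem hasDerivAt_nloFreeEnergyOfG_comp (hG : IsMelonicSolution D G) (hD : 1 < D)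
    (hg : g ∈ Ioo 0 (criticalCoupling D)) :
    HasDerivAt (fun t => nloFreeEnergyOfG D (G t)) (nloTwoPoint D g (G g) / g) g := by
  have hD0 : 0 < D := by omega
  have hgI := Ioo_subset_Icc_self hg
  obtain ⟨h1, -⟩ := hG.mapsTo hgI
  have hlt := hG.lt_criticalG hD0 (Ioo_subset_Ico_self hg)
  have h2 : G g < 2 := by linarith [criticalG_lt_two hD]
  refine ((hasDerivAt_nloFreeEnergyOfG (by linarith) h2).comp g
    (hG.hasDerivAt hD0 hg)).congr_deriv ?_
  rw [nloTwoPoint, hG.one_sub_mul_pow_eq hD0 hgI]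
  have hgu : g = melonicCoupling D (G g) := (hG.leftInvOn hgI).symm
  set u := G g
  have hu1 : u - 1 ≠ 0 := by
    intro h
    rw [melonicCoupling, h, zero_div] at hgu
    exact hg.1.ne' hgu
  have hD' : (D : ℝ) ≠ 0 := by exact_mod_cast hD0.ne'
  have hu0 : u ≠ 0 := by linarith
  have hu2 : 2 - u ≠ 0 := by linarith
  have huc : criticalG D - u ≠ 0 := by linarith
  rw [hgu, melonicCoupling]
  field_simp
  ring

theorem integral_nloTwoPoint_div (hG : IsMelonicSolution D G) (hD : 1 < D)
    (hg : g ∈ Ico 0 (criticalCoupling D)) :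
    ∫ t in (0 : ℝ)..g, nloTwoPoint D t (G t) / t = nloFreeEnergyOfG D (G g) := by
  have hD0 : 0 < D := by omega
  have hIcc : Icc 0 g ⊆ Icc 0 (criticalCoupling D) := Icc_subset_Icc_right hg.2.le
  have hIoo : Ioo 0 g ⊆ Ioo 0 (criticalCoupling D) := Ioo_subset_Ioo_right hg.2.le
  have hcont : ContinuousOn (fun t => nloFreeEnergyOfG D (G t)) (Icc 0 g) :=
    (continuousOn_nloFreeEnergyOfG.comp (hG.continuousOn hD0)
      fun t ht => Icc_one_criticalG_subset hD (hG.mapsTo ht)).mono hIcc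
  have hderiv : ∀ t ∈ Ioo 0 g,
      HasDerivAt (fun t => nloFreeEnergyOfG D (G t)) (nloTwoPoint D t (G t) / t) t :=
    fun t ht => hG.hasDerivAt_nloFreeEnergyOfG_comp hD (hIoo ht)
  have hint := intervalIntegral.integrableOn_deriv_of_nonneg hcont hderiv
    fun t ht => hG.nloTwoPoint_div_nonneg hD (hIoo ht)
  rw [intervalIntegral.integral_eq_sub_of_hasDerivAt_of_le hg.1 hcont hderiv
    ((intervalIntegrable_iff_integrableOn_Ioc_of_le hg.1).2 hint), hG.apply_zero hD0,
    nloFreeEnergyOfG_one, sub_zero]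

end IsMelonicSolution

end MelonicNLO

open MelonicNLO in
/-- Let `D ≥ 3`, `g_c := D^D/(D+1)^(D+1)`, `G_LO` the leading-order melonic
2-point function, `G_NLO` the next-to-leading-order 2-point function (closed form), and
`E_NLO(g) := ∫_0^g G_NLO(t)/t dt` the next-to-leading-order free energy. Then `E_NLO` extends
to a continuous function on `[0, g_c]` and
`lim_{g→g_c⁻} (E_NLO(g_c) − E_NLO(g)) / √(1 − g/g_c) = √(D(D+1)/2)/(D − 1)`, i.e. the
susceptibility exponent is `γ_NLO = 3/2`. -/
theorem nlo_free_energy_critical_behaviour (D : ℕ) (hD : 3 ≤ D) (G_LO G_NLO E_NLO : ℝ → ℝ)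
    (hG : ∀ g ∈ Set.Icc (0 : ℝ) ((D : ℝ) ^ D / ((D : ℝ) + 1) ^ (D + 1)),
      G_LO g ∈ Set.Icc (1 : ℝ) (((D : ℝ) + 1) / D) ∧ G_LO g = 1 + g * (G_LO g) ^ (D + 1))
    (hN : ∀ g ∈ Set.Ico (0 : ℝ) ((D : ℝ) ^ D / ((D : ℝ) + 1) ^ (D + 1)),
      G_NLO g = ((D : ℝ) * ((D : ℝ) + 1) / 2) * g ^ 2 * (G_LO g) ^ (2 * D + 2) /
        ((2 - G_LO g) * (1 - g * D * (G_LO g) ^ (D + 1))))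
    (hE : ∀ g ∈ Set.Ico (0 : ℝ) ((D : ℝ) ^ D / ((D : ℝ) + 1) ^ (D + 1)),
      E_NLO g = ∫ t in (0 : ℝ)..g, G_NLO t / t) :
    ∃ F : ℝ → ℝ,
      ContinuousOn F (Set.Icc (0 : ℝ) ((D : ℝ) ^ D / ((D : ℝ) + 1) ^ (D + 1))) ∧
      (∀ g ∈ Set.Ico (0 : ℝ) ((D : ℝ) ^ D / ((D : ℝ) + 1) ^ (D + 1)), F g = E_NLO g) ∧
      Filter.Tendsto
        (fun g : ℝ => (F ((D : ℝ) ^ D / ((D : ℝ) + 1) ^ (D + 1)) - F g) /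
          Real.sqrt (1 - g / ((D : ℝ) ^ D / ((D : ℝ) + 1) ^ (D + 1))))
        (nhdsWithin ((D : ℝ) ^ D / ((D : ℝ) + 1) ^ (D + 1))
          (Set.Iio ((D : ℝ) ^ D / ((D : ℝ) + 1) ^ (D + 1))))
        (nhds (Real.sqrt ((D : ℝ) * ((D : ℝ) + 1) / 2) / ((D : ℝ) - 1))) := by
  have hD1 : 1 < D := by omega
  have hD0 : 0 < D := by omega
  have hsol : IsMelonicSolution D G_LO := hG
  rw [← criticalCoupling] at hN hE ⊢
  refine ⟨fun g => nloFreeEnergyOfG D (G_LO g), ?_, fun g hg => ?_, ?_⟩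
  · exact continuousOn_nloFreeEnergyOfG.comp (hsol.continuousOn hD0)
      fun g hg => Icc_one_criticalG_subset hD1 (hsol.mapsTo hg)
  · dsimp only
    rw [hE g hg, ← hsol.integral_nloTwoPoint_div hD1 hg]
    refine intervalIntegral.integral_congr fun t ht => ?_
    rw [uIcc_of_le hg.1] at ht
    rw [hN t ⟨ht.1, ht.2.trans_lt hg.2⟩, nloTwoPoint]
  · refine ((tendsto_nloFreeEnergyOfG_critical hD1).comp (hsol.tendsto_nhdsLT hD0)).congr' ?_
    filter_upwards [Ioo_mem_nhdsLT (criticalCoupling_pos hD0)] with g hg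
    rw [Function.comp_apply, hsol.leftInvOn (Ioo_subset_Icc_self hg),
      hsol.apply_criticalCoupling hD0]
end

section
/- Let D ≥ 1 and p ≥ 1 be integers, and let a closed (D+1)-colored graph with 2p vertices be encoded by permutations π_0, …, π_D of {1, …, p}. If the graph is connected (i.e., the subgroup of the symmetric group generated by {π_0⁻¹∘π_c : 0 ≤ c ≤ D} acts transitively on {1, …, p}), then the total number of faces F := Σ_{0≤c<c'≤D} (number of cycles of π_{c'}∘π_c⁻¹) satisfies F ≤ D + D(D−1)p/2; equivalently, the degree ω := ((D−1)!/2)·(D + D(D−1)p/2 − F) is nonnegative. -/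
/-!
For a cyclic ordering `g` of the `D + 1` colours (a jacket), the faces of the consecutive
species `{g i, g (i + 1)}` number at most `(D - 1) p + 2`. This genus bound follows from Scott's
linear-algebra argument for the permutation action on `ℚ^p`, connectivity making the common
fixed vectors one-dimensional. Averaging over all `(D + 1)!` orderings, every species is
consecutive in the same number of them, which turns the jacket bounds into
`F ≤ D + D (D - 1) p / 2`.
-/

/-- The number of cycles (orbits, including fixed points) of a permutation of `Fin n`. -/
def cycleCount {n : ℕ} (σ : Equiv.Perm (Fin n)) : ℕ :=
  σ.cycleType.card + (Finset.univ.filter fun i => σ i = i).card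

open Module LinearMap Finset Equiv

open Fin.NatCast in
theorem AddSubgroup.sub_mem_of_forall_add_one_sub_mem {G : Type*} [AddCommGroup G] {k : ℕ}
    [NeZero k] (U : AddSubgroup G) {a : Fin k → G} (ha : ∀ i, a (i + 1) - a i ∈ U)
    (i j : Fin k) : a j - a i ∈ U := by
  have from_zero (m : ℕ) : a m - a 0 ∈ U := by
    induction m with
    | zero => simp
    | succ m ih =>
      rw [Nat.cast_succ, ← sub_add_sub_cancel _ (a m)]
      exact add_mem (ha m) ih
  rw [← sub_sub_sub_cancel_right _ _ (a 0), ← Fin.cast_val_eq_self i, ← Fin.cast_val_eq_self j]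
  exact sub_mem (from_zero j) (from_zero i)

/-- Scott's inequality: the maps `B i` are the components of `θ : V → Π i, range (B i)`, and
`∑ i, B i = 0` says that the range of `θ` lies in the kernel of the summation map. -/
theorem LinearMap.finrank_add_finrank_iSup_range_le_of_sum_eq_zero {K V W ι : Type*}
    [DivisionRing K] [AddCommGroup V] [Module K V] [FiniteDimensional K V] [AddCommGroup W]
    [Module K W] [Fintype ι] (B : ι → V →ₗ[K] W) (hB : ∑ i, B i = 0) :
    finrank K V + finrank K ↥(⨆ i, range (B i))
      ≤ ∑ i, finrank K ↥(range (B i)) + finrank K ↥(⨅ i, ker (B i)) := by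
  classical
  let θ : V →ₗ[K] Π i, range (B i) := LinearMap.pi fun i => (B i).rangeRestrict
  let s : (Π i, range (B i)) →ₗ[K] W := ∑ i, (range (B i)).subtype ∘ₗ proj i
  have hsθ : s ∘ₗ θ = 0 := by
    ext v
    simpa [s, θ] using congr($hB v)
  have hθ : ker θ = ⨅ i, ker (B i) := by simp [θ, ker_pi]
  have hs : ⨆ i, range (B i) ≤ range s := by
    refine iSup_le fun i w hw => ⟨Pi.single i ⟨w, hw⟩, ?_⟩
    simp only [s, LinearMap.sum_apply, comp_apply, proj_apply, Submodule.subtype_apply]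
    rw [sum_eq_single i (fun j _ hj => by simp [Pi.single_eq_of_ne hj]) (by simp)]
    simp
  have hθ_rank := finrank_range_add_finrank_ker θ
  have hs_rank := finrank_range_add_finrank_ker s
  have hθs : finrank K (range θ) ≤ finrank K (ker s) :=
    Submodule.finrank_mono (range_le_ker_iff.mpr hsθ)
  have := Submodule.finrank_mono hs
  rw [hθ] at hθ_rank
  rw [finrank_pi_fintype] at hs_rank
  omega

namespace Submodule

variable {K α : Type*} [Field K] [Fintype α]

theorem finrank_le_one_of_forall_apply_eq {U : Submodule K (α → K)}
    (hU : ∀ v ∈ U, ∀ x y, v x = v y) : finrank K U ≤ 1 := by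
  rcases isEmpty_or_nonempty α with hα | ⟨⟨x₀⟩⟩
  · exact (finrank_le U).trans (by simp)
  · have hle : U ≤ K ∙ (fun _ => 1 : α → K) := fun v hv =>
      mem_span_singleton.mpr ⟨v x₀, funext fun x => by simp [hU v hv x₀ x]⟩
    calc finrank K U ≤ finrank K (K ∙ (fun _ => 1 : α → K)) := finrank_mono hle
      _ ≤ 1 := by simpa using finrank_span_le_card ({fun _ => 1} : Set (α → K))

theorem card_le_finrank_add_one_of_single_sub_single_mem [DecidableEq α]
    {U : Submodule K (α → K)} (hU : ∀ x y, Pi.single x 1 - Pi.single y 1 ∈ U) :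
    Fintype.card α ≤ finrank K U + 1 := by
  rcases isEmpty_or_nonempty α with hα | ⟨⟨x₀⟩⟩
  · simp
  · let L : Submodule K (α → K) := K ∙ Pi.single x₀ 1
    have htop : U ⊔ L = ⊤ := by
      rw [eq_top_iff, ← (Pi.basisFun K α).span_eq, span_le]
      rintro _ ⟨x, rfl⟩
      simpa using add_mem_sup (hU x x₀) (mem_span_singleton_self (Pi.single x₀ 1))
    have hL : finrank K L ≤ 1 := by
      simpa using finrank_span_le_card ({Pi.single x₀ 1} : Set (α → K))
    have hsup := finrank_add_le_finrank_add_finrank U L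
    rw [htop, finrank_top, finrank_fintype_fun_eq_card] at hsup
    omega

end Submodule

namespace Equiv.Perm

variable {α β : Type*}

theorem comp_eq_of_mem_closure {S : Set (Perm α)} {v : α → β} (hS : ∀ s ∈ S, v ∘ s = v)
    {τ : Perm α} (hτ : τ ∈ Subgroup.closure S) : v ∘ τ = v := by
  induction hτ using Subgroup.closure_induction with
  | mem s hs => exact hS s hs
  | one => rfl
  | mul a b _ _ ha hb => rw [coe_mul, ← Function.comp_assoc, ha, hb]
  | inv a _ ha =>
    conv_lhs => rw [← ha, Function.comp_assoc, ← coe_mul, mul_inv_cancel, coe_one,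
      Function.comp_id]

theorem comp_sub_mem_of_mem_closure {M : Type*} [AddCommGroup M] {U : AddSubgroup (α → M)}
    {S : Set (Perm α)} (hS : ∀ s ∈ S, ∀ v : α → M, v ∘ s - v ∈ U) {τ : Perm α}
    (hτ : τ ∈ Subgroup.closure S) (v : α → M) : v ∘ τ - v ∈ U := by
  induction hτ using Subgroup.closure_induction generalizing v with
  | mem s hs => exact hS s hs v
  | one => simp
  | mul a b _ _ ha hb =>
    have : v ∘ ⇑(a * b) - v = ((v ∘ a) ∘ b - v ∘ a) + (v ∘ a - v) := by
      rw [coe_mul, Function.comp_assoc]; abel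
    rw [this]
    exact add_mem (hb _) (ha v)
  | inv a _ ha =>
    have : v ∘ ⇑a⁻¹ - v = -((v ∘ ⇑a⁻¹) ∘ a - v ∘ ⇑a⁻¹) := by
      rw [Function.comp_assoc, ← coe_mul, inv_mul_cancel, coe_one, Function.comp_id, neg_sub]
    rw [this]
    exact neg_mem (ha _)

theorem comp_eq_self_iff_forall_sameCycle {σ : Perm α} {v : α → β} :
    v ∘ σ = v ↔ ∀ x y, σ.SameCycle x y → v x = v y := by
  refine ⟨fun h x y ⟨i, hi⟩ => ?_, fun h => funext fun x => ?_⟩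
  · have hmem : σ ^ i ∈ Subgroup.closure {σ} :=
      Subgroup.zpowers_eq_closure σ ▸ Subgroup.zpow_mem_zpowers σ i
    rw [← hi]
    exact (congrFun (comp_eq_of_mem_closure (by simpa using h) hmem) x).symm
  · exact (h x (σ x) (sameCycle_apply_right.2 (SameCycle.refl σ x))).symm

theorem ker_funLeft_sub_funLeft (K : Type*) [Field K] (σ τ : Perm α) :
    ker (funLeft K K σ - funLeft K K τ) =
      range (funLeft K K (Quotient.mk (SameCycle.setoid (σ * τ⁻¹)))) := by
  ext v
  have hcomp : v ∘ σ = v ∘ τ ↔ v ∘ ⇑(σ * τ⁻¹) = v := by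
    rw [coe_mul, ← Function.comp_assoc, inv_def, Equiv.comp_symm_eq]
  rw [mem_ker, LinearMap.sub_apply, sub_eq_zero, LinearMap.mem_range]
  change v ∘ σ = v ∘ τ ↔ ∃ w, w ∘ _ = v
  rw [hcomp, comp_eq_self_iff_forall_sameCycle]
  refine ⟨fun h => ⟨Quotient.lift v h, rfl⟩, ?_⟩
  rintro ⟨w, rfl⟩ x y hxy
  exact congrArg w (Quotient.sound hxy)

variable [Fintype α]

theorem finrank_ker_funLeft_sub_funLeft (K : Type*) [Field K] (σ τ : Perm α) :
    finrank K (ker (funLeft K K σ - funLeft K K τ)) =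
      Nat.card (Quotient (SameCycle.setoid (σ * τ⁻¹))) := by
  classical
  rw [ker_funLeft_sub_funLeft, finrank_range_of_inj
    (funLeft_injective_of_surjective _ _ _ Quotient.mk_surjective),
    finrank_fintype_fun_eq_card, Nat.card_eq_fintype_card]

variable [DecidableEq α]

theorem cycleFactorsFinset_eq_image_cycleOf (σ : Perm α) :
    σ.cycleFactorsFinset = σ.support.image σ.cycleOf := by
  ext c
  simp only [mem_image]
  constructor
  · intro hc
    obtain ⟨x, hx⟩ := (mem_cycleFactorsFinset_iff.mp hc).1.nonempty_support
    exact ⟨x, mem_cycleFactorsFinset_support_le hc hx, (cycle_is_cycleOf hx hc).symm⟩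
  · rintro ⟨x, hx, rfl⟩
    exact cycleOf_mem_cycleFactorsFinset_iff.mpr hx

theorem card_quotient_sameCycle (σ : Perm α) :
    Nat.card (Quotient (SameCycle.setoid σ)) = σ.cycleType.card + #{x | σ x = x} := by
  classical
  let mk : α → Quotient (SameCycle.setoid σ) := Quotient.mk _
  have hfixed : #(({x | σ x = x} : Finset α).image mk) = #{x | σ x = x} :=
    card_image_of_injOn fun x hx y _ hxy => (Quotient.exact hxy).eq_of_left (mem_filter.mp hx).2
  have hmoved : #(σ.support.image mk) = σ.cycleType.card := by
    let c : Quotient (SameCycle.setoid σ) → Perm α :=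
      Quotient.lift σ.cycleOf fun _ _ h => SameCycle.cycleOf_eq h
    have hc : σ.support.image σ.cycleOf = (σ.support.image mk).image c := by
      rw [image_image]; rfl
    rw [cycleType_def, Multiset.card_map, ← card_def, cycleFactorsFinset_eq_image_cycleOf, hc]
    refine (card_image_of_injOn ?_).symm
    simp only [coe_image, Set.InjOn, Set.mem_image, mem_coe]
    rintro _ ⟨x, hx, rfl⟩ _ ⟨y, hy, rfl⟩ hxy
    exact Quotient.sound ((sameCycle_iff_cycleOf_eq_of_mem_support hx hy).mpr hxy)
  have hdisj : _root_.Disjoint (({x | σ x = x} : Finset α).image mk) (σ.support.image mk) := by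
    simp only [disjoint_left, mem_image, mem_filter, mem_univ, true_and, mem_support]
    rintro _ ⟨x, hx, rfl⟩ ⟨y, hy, hxy⟩
    exact hy (((Quotient.exact hxy).apply_eq_self_iff).mpr hx)
  have hunion : ({x | σ x = x} : Finset α) ∪ σ.support = univ := by
    ext x; simp [mem_support, em]
  rw [← hfixed, ← hmoved, add_comm, ← card_union_of_disjoint hdisj, ← image_union, hunion,
    image_univ_of_surjective Quotient.mk_surjective, card_univ, Nat.card_eq_fintype_card]

variable {M : Type*} [AddCommMonoid M]

theorem sum_apply_apply_eq_of_ne (f : α → α → M) {a b c d : α} (hab : a ≠ b) (hcd : c ≠ d) :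
    ∑ g : Perm α, f (g a) (g b) = ∑ g : Perm α, f (g c) (g d) := by
  obtain ⟨π, hπc, hπd⟩ := MulAction.is_two_pretransitive_iff.mp
    (isMultiplyPretransitive α 2) hcd hab
  exact Fintype.sum_equiv (Equiv.mulRight π) _ _ fun g => by simp [← hπc, ← hπd]

theorem card_offDiag_smul_sum_apply_apply (f : α → α → M) {a b : α} (hab : a ≠ b) :
    #(univ : Finset α).offDiag • ∑ g : Perm α, f (g a) (g b)
      = Fintype.card (Perm α) • ∑ x ∈ univ.offDiag, f x.1 x.2 := by
  calc #(univ : Finset α).offDiag • ∑ g : Perm α, f (g a) (g b)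
      = ∑ x ∈ univ.offDiag, ∑ g : Perm α, f (g x.1) (g x.2) := by
        rw [← sum_const]
        exact sum_congr rfl fun x hx => sum_apply_apply_eq_of_ne f hab (mem_offDiag.mp hx).2.2
    _ = ∑ g : Perm α, ∑ x ∈ univ.offDiag, f x.1 x.2 := by
        rw [sum_comm]
        exact sum_congr rfl fun g _ => sum_equiv (g.prodCongr g) (by simp) (by simp)
    _ = Fintype.card (Perm α) • ∑ x ∈ univ.offDiag, f x.1 x.2 := by
        rw [sum_const, card_univ]

end Equiv.Perm

theorem Finset.sum_offDiag_eq_two_mul_sum_lt {ι : Type*} [Fintype ι] [LinearOrder ι]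
    (f : ι → ι → ℕ) (hf : ∀ a b, f a b = f b a) :
    ∑ x ∈ (univ : Finset ι).offDiag, f x.1 x.2 = 2 * ∑ c, ∑ c' ∈ univ.filter (c < ·), f c' c := by
  have hsplit (c c' : ι) : (if c ≠ c' then f c c' else 0)
      = (if c < c' then f c' c else 0) + (if c' < c then f c c' else 0) := by
    rcases lt_trichotomy c c' with h | rfl | h
    · simp [h, h.ne, h.not_gt, hf c c']
    · simp
    · simp [h, h.ne', h.not_gt]
  calc ∑ x ∈ (univ : Finset ι).offDiag, f x.1 x.2
      = ∑ c, ∑ c', if c ≠ c' then f c c' else 0 := by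
        have : (univ : Finset ι).offDiag = (univ ×ˢ univ).filter fun x => x.1 ≠ x.2 := by
          ext; simp
        rw [this, sum_filter, sum_product]
    _ = ∑ c, ∑ c', (if c < c' then f c' c else 0) + ∑ c, ∑ c', (if c' < c then f c c' else 0) := by
        simp only [hsplit, sum_add_distrib]
    _ = 2 * ∑ c, ∑ c' ∈ univ.filter (c < ·), f c' c := by
        rw [sum_comm (f := fun c c' => if c' < c then f c c' else 0), two_mul]
        simp only [sum_filter]

theorem two_mul_sum_pairs_le_of_forall_cyclic_sum_le {D b : ℕ} (hD : 1 ≤ D)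
    (f : Fin (D + 1) → Fin (D + 1) → ℕ) (hf : ∀ a c, f a c = f c a)
    (hb : ∀ g : Perm (Fin (D + 1)), ∑ i, f (g (i + 1)) (g i) ≤ b) :
    2 * ∑ c, ∑ c' ∈ univ.filter (c < ·), f c' c ≤ D * b := by
  set N := (D + 1).factorial
  set S := ∑ g : Perm (Fin (D + 1)), f (g 1) (g 0)
  have h10 : (1 : Fin (D + 1)) ≠ 0 := by simp [Fin.one_eq_zero_iff]; omega
  have hcyclic : (D + 1) * S ≤ N * b := by
    have hS (i : Fin (D + 1)) : ∑ g : Perm (Fin (D + 1)), f (g (i + 1)) (g i) = S :=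
      Perm.sum_apply_apply_eq_of_ne f (by simpa using h10) h10
    have := sum_le_sum fun g (_ : g ∈ univ) => hb g
    rw [sum_comm, sum_congr rfl fun i _ => hS i] at this
    simpa only [sum_const, card_univ, Fintype.card_fin, Fintype.card_perm, smul_eq_mul] using this
  have hpairs : (D + 1) * D * S = N * (2 * ∑ c, ∑ c' ∈ univ.filter (c < ·), f c' c) := by
    have := Perm.card_offDiag_smul_sum_apply_apply f h10
    rwa [offDiag_card, card_univ, Fintype.card_fin, Fintype.card_perm, Fintype.card_fin,
      sum_offDiag_eq_two_mul_sum_lt f hf, smul_eq_mul, smul_eq_mul,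
      show (D + 1) * (D + 1) - (D + 1) = (D + 1) * D by rw [Nat.mul_succ, Nat.add_sub_cancel]]
      at this
  refine Nat.le_of_mul_le_mul_left ?_ (Nat.factorial_pos (D + 1))
  calc N * (2 * ∑ c, ∑ c' ∈ univ.filter (c < ·), f c' c) = D * ((D + 1) * S) := by
        rw [← hpairs]; ring
    _ ≤ D * (N * b) := Nat.mul_le_mul_left D hcyclic
    _ = N * (D * b) := by ring

theorem cycleCount_inv {n : ℕ} (σ : Perm (Fin n)) : cycleCount σ⁻¹ = cycleCount σ := by
  simp only [cycleCount, Perm.cycleType_inv, Perm.inv_eq_iff_eq]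
  simp_rw [eq_comm]

theorem finrank_range_funLeft_sub_funLeft_add_cycleCount (K : Type*) [Field K] {n : ℕ}
    (σ τ : Perm (Fin n)) :
    finrank K (range (funLeft K K σ - funLeft K K τ)) + cycleCount (σ * τ⁻¹) = n := by
  rw [cycleCount, ← Perm.card_quotient_sameCycle, ← Perm.finrank_ker_funLeft_sub_funLeft K,
    finrank_range_add_finrank_ker, finrank_fin_fun]

section CyclicSequence

variable {K α : Type*} [Field K] [Fintype α] {k : ℕ} [NeZero k] {Q : Fin k → Perm α}

theorem finrank_iInf_ker_funLeft_sub_funLeft_le_one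
    (hQ : ∀ x y, ∃ σ ∈ Subgroup.closure {σ | ∃ i j, σ = (Q i)⁻¹ * Q j}, σ x = y) :
    finrank K ↥(⨅ i, ker (funLeft K K (Q (i + 1)) - funLeft K K (Q i))) ≤ 1 := by
  refine Submodule.finrank_le_one_of_forall_apply_eq fun v hv x y => ?_
  have hconst (i j : Fin k) : v ∘ Q j = v ∘ Q i := by
    have hv' (i : Fin k) : v ∘ Q (i + 1) - v ∘ Q i ∈ (⊥ : AddSubgroup (α → K)) :=
      AddSubgroup.mem_bot.mpr ((Submodule.mem_iInf _).mp hv i)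
    simpa [sub_eq_zero] using
      AddSubgroup.sub_mem_of_forall_add_one_sub_mem _ (a := fun i => v ∘ Q i) hv' i j
  have hinv : ∀ τ ∈ Subgroup.closure {σ | ∃ i j, σ = (Q i)⁻¹ * Q j}, (v ∘ Q 0) ∘ τ = v ∘ Q 0 := by
    refine fun τ hτ => Perm.comp_eq_of_mem_closure ?_ hτ
    rintro _ ⟨i, j, rfl⟩
    calc (v ∘ Q 0) ∘ ⇑((Q i)⁻¹ * Q j) = (v ∘ Q i) ∘ ⇑((Q i)⁻¹ * Q j) := by rw [hconst 0 i]
      _ = v ∘ Q j := by ext; simp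
      _ = v ∘ Q 0 := hconst 0 j
  obtain ⟨τ, hτ, hτxy⟩ := hQ ((Q 0)⁻¹ x) ((Q 0)⁻¹ y)
  have := congrFun (hinv τ hτ) ((Q 0)⁻¹ x)
  rw [Function.comp_apply, Function.comp_apply, hτxy] at this
  simpa using this.symm

theorem card_le_finrank_iSup_range_funLeft_sub_funLeft_add_one [DecidableEq α]
    (hQ : ∀ x y, ∃ σ ∈ Subgroup.closure {σ | ∃ i j, σ = (Q i)⁻¹ * Q j}, σ x = y) :
    Fintype.card α ≤ finrank K ↥(⨆ i, range (funLeft K K (Q (i + 1)) - funLeft K K (Q i))) + 1 := by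
  let U := (⨆ i, range (funLeft K K (Q (i + 1)) - funLeft K K (Q i))).toAddSubgroup
  have hgen : ∀ τ ∈ Subgroup.closure {σ | ∃ i j, σ = (Q i)⁻¹ * Q j}, ∀ u : α → K,
      u ∘ τ - u ∈ U := by
    refine fun τ hτ => Perm.comp_sub_mem_of_mem_closure ?_ hτ
    rintro _ ⟨i, j, rfl⟩ u
    let v := u ∘ ⇑(Q i)⁻¹
    convert U.sub_mem_of_forall_add_one_sub_mem (a := fun l => v ∘ Q l)
      (fun l => Submodule.mem_iSup_of_mem l (mem_range_self _ v)) i j using 2 <;>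
    ext <;> simp [v]
  refine Submodule.card_le_finrank_add_one_of_single_sub_single_mem fun x y => ?_
  obtain ⟨τ, hτ, hτxy⟩ := hQ x y
  have hsingle : (Pi.single y 1 : α → K) ∘ τ = Pi.single x 1 := by
    ext t; simp [Pi.single_apply, ← hτxy, τ.injective.eq_iff]
  simpa [hsingle, U] using hgen τ hτ (Pi.single y 1)

end CyclicSequence

/-- The genus bound for the jacket with colour cycle `Q 0, Q 1, …, Q (k - 1)`. -/
theorem sum_cycleCount_mul_inv_add_le {p k : ℕ} [NeZero k] (Q : Fin k → Perm (Fin p))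
    (hQ : ∀ x y, ∃ σ ∈ Subgroup.closure {σ | ∃ i j, σ = (Q i)⁻¹ * Q j}, σ x = y) :
    ∑ i, cycleCount (Q (i + 1) * (Q i)⁻¹) + 2 * p ≤ k * p + 2 := by
  have hB : ∑ i, (funLeft ℚ ℚ (Q (i + 1)) - funLeft ℚ ℚ (Q i)) = 0 := by
    rw [sum_sub_distrib, sub_eq_zero]
    exact Fintype.sum_equiv (Equiv.addRight 1) _ _ fun _ => rfl
  have hscott := finrank_add_finrank_iSup_range_le_of_sum_eq_zero _ hB
  have hker := finrank_iInf_ker_funLeft_sub_funLeft_le_one (K := ℚ) hQ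
  have hrange := card_le_finrank_iSup_range_funLeft_sub_funLeft_add_one (K := ℚ) hQ
  have hrank : ∑ i, finrank ℚ ↥(range (funLeft ℚ ℚ (Q (i + 1)) - funLeft ℚ ℚ (Q i)))
      + ∑ i, cycleCount (Q (i + 1) * (Q i)⁻¹) = k * p := by
    simp [← sum_add_distrib, finrank_range_funLeft_sub_funLeft_add_cycleCount]
  rw [finrank_fin_fun] at hscott
  rw [Fintype.card_fin] at hrange
  omega

theorem colored_graph_degree_nonneg_general (D p : ℕ) (hD : 1 ≤ D)
    (P : Fin (D + 1) → Equiv.Perm (Fin p))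
    (hconn : ∀ i j : Fin p,
      ∃ σ ∈ Subgroup.closure {σ : Equiv.Perm (Fin p) | ∃ c : Fin (D + 1), σ = (P 0)⁻¹ * P c},
        σ i = j) :
    ((∑ c : Fin (D + 1), ∑ c' ∈ Finset.univ.filter (fun c' => c < c'),
        cycleCount (P c' * (P c)⁻¹) : ℕ) : ℚ)
      ≤ (D : ℚ) + (D : ℚ) * ((D : ℚ) - 1) * (p : ℚ) / 2 := by
  obtain ⟨m, rfl⟩ : ∃ m, D = m + 1 := ⟨D - 1, by omega⟩
  have hjacket (g : Perm (Fin (m + 2))) :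
      ∑ i, cycleCount (P (g (i + 1)) * (P (g i))⁻¹) ≤ m * p + 2 := by
    have := sum_cycleCount_mul_inv_add_le (P ∘ g) fun x y => by
      obtain ⟨σ, hσ, hσxy⟩ := hconn x y
      refine ⟨σ, Subgroup.closure_mono ?_ hσ, hσxy⟩
      rintro _ ⟨c, rfl⟩
      exact ⟨g⁻¹ 0, g⁻¹ c, by simp⟩
    simp only [Function.comp_apply] at this
    linarith
  have hsymm (a c : Fin (m + 2)) :
      cycleCount (P a * (P c)⁻¹) = cycleCount (P c * (P a)⁻¹) := by
    rw [← cycleCount_inv, mul_inv_rev, inv_inv]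
  have := two_mul_sum_pairs_le_of_forall_cyclic_sum_le (by omega) _ hsymm hjacket
  have := (Nat.cast_le (α := ℚ)).mpr this
  push_cast at this ⊢
  linarith

/-- Let `D ≥ 1`, `p ≥ 1`, and a closed `(D+1)`-colored graph with `2p` vertices
be encoded by permutations `π_0, …, π_D` of `{1,…,p}`. If the graph is connected (the subgroup
generated by `{π_0⁻¹∘π_c}` acts transitively), then the total face count
`F = Σ_{c<c'} #cycles(π_{c'}∘π_c⁻¹)` satisfies `F ≤ D + D(D−1)p/2`, i.e. the degree
`ω := ((D−1)!/2)·(D + D(D−1)p/2 − F)` is nonnegative. -/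
theorem colored_graph_degree_nonneg (D p : ℕ) (hD : 1 ≤ D) (hp : 1 ≤ p)
    (P : Fin (D + 1) → Equiv.Perm (Fin p))
    (hconn : ∀ i j : Fin p,
      ∃ σ ∈ Subgroup.closure {σ : Equiv.Perm (Fin p) | ∃ c : Fin (D + 1), σ = (P 0)⁻¹ * P c},
        σ i = j) :
    ((∑ c : Fin (D + 1), ∑ c' ∈ Finset.univ.filter (fun c' => c < c'),
        cycleCount (P c' * (P c)⁻¹) : ℕ) : ℚ)
      ≤ (D : ℚ) + (D : ℚ) * ((D : ℚ) - 1) * (p : ℚ) / 2 :=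
  colored_graph_degree_nonneg_general D p hD P hconn
end
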